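/- arXiv:2206.02395 — 6 statements merged into one kernel-verified Lean document; each statement's English description precedes it below -/
import Mathlib

section
/- Let G be a graph, let 𝓗 be a set of connected subgraphs of G, and let ℓ ∈ ℕ₀. Then either there exist more than ℓ pairwise vertex-disjoint subgraphs in 𝓗, or there is a set Q ⊆ V(G) with |Q| ≤ (tw(G)+1)·ℓ·log₂(ℓ+1) such that G − Q contains no subgraph belonging to 𝓗. -/
open SimpleGraph

universe u

/-- A tree-decomposition of a graph `G`. -/
structure TreeDecomp {V : Type u} (G : SimpleGraph V) : Type (u + 1) where
  ι : Type u
  T : SimpleGraph ι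
  isTree : T.IsTree
  bag : ι → Set V
  mem_bag : ∀ v : V, ∃ i, v ∈ bag i
  edge_bag : ∀ ⦃u v : V⦄, G.Adj u v → ∃ i, u ∈ bag i ∧ v ∈ bag i
  bag_conn : ∀ v : V, (T.induce {i | v ∈ bag i}).Connected

/-- `G` has treewidth at most `k`. -/
def TreewidthLE {V : Type u} (G : SimpleGraph V) (k : ℕ) : Prop :=
  ∃ d : TreeDecomp G, ∀ i, (d.bag i).ncard ≤ k + 1

/-- The treewidth of `G`. -/
noncomputable def treewidth {V : Type u} (G : SimpleGraph V) : ℕ :=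
  sInf {k | TreewidthLE G k}

/-!
In a tree-decomposition, the nodes whose bags meet a connected subgraph `H` form a subtree,
the trace of `H`, and disjoint traces come from disjoint subgraphs. Subtrees of a tree satisfy the
Erdős–Pósa property with transversals of size `ℓ`: root the tree, take the subtree whose vertex
closest to the root (its gate) is farthest from the root; that gate lies in every subtree meeting
it, so adding it to the transversal and recursing on the subtrees disjoint from it works.
Replacing the `ℓ` transversal nodes by their bags gives `(tw(G) + 1) · ℓ` vertices, which is at
most the claimed bound since `log₂ (ℓ + 1) ≥ 1` for `ℓ ≥ 1`.
-/

namespace SimpleGraph.IsTree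

variable {ι : Type*} {T : SimpleGraph ι}

lemma length_eq_dist_of_isPath (hT : T.IsTree) {u v : ι} {p : T.Walk u v} (hp : p.IsPath) :
    p.length = T.dist u v := by
  obtain ⟨q, hq, hql⟩ := hT.connected.exists_path_of_dist u v
  rw [(hT.existsUnique_path u v).unique hp hq, hql]

lemma dist_lt_of_mem_support_of_isPath (hT : T.IsTree) {r x u : ι} {p : T.Walk r x}
    (hp : p.IsPath) (hu : u ∈ p.support) (hux : u ≠ x) : T.dist r u < T.dist r x := by
  classical
  rw [← hT.length_eq_dist_of_isPath hp, ← hT.length_eq_dist_of_isPath (hp.takeUntil hu)]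
  exact Walk.length_takeUntil_lt_length hu hux

lemma mem_of_mem_support_of_isPath (hT : T.IsTree) {S : Set ι} (hS : (T.induce S).Preconnected)
    {a b : ι} (ha : a ∈ S) (hb : b ∈ S) {p : T.Walk a b} (hp : p.IsPath) :
    ∀ u ∈ p.support, u ∈ S := by
  classical
  obtain ⟨w⟩ := hS ⟨a, ha⟩ ⟨b, hb⟩
  let w' : T.Walk a b := w.map (Embedding.induce S).toHom
  have hpw : p = w'.bypass := (hT.existsUnique_path a b).unique hp w'.bypass_isPath
  intro u hu
  have hu' := w'.support_bypass_subset_support (hpw ▸ hu)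
  rw [show w'.support = _ from Walk.support_map _ _] at hu'
  obtain ⟨z, -, rfl⟩ := List.mem_map.mp hu'
  exact z.2

lemma mem_support_of_isPath_of_forall_dist_le (hT : T.IsTree) {S : Set ι}
    (hS : (T.induce S).Preconnected) {r x : ι} (hx : x ∈ S)
    (hmin : ∀ y ∈ S, T.dist r x ≤ T.dist r y) {y : ι} (hy : y ∈ S) {p : T.Walk r y}
    (hp : p.IsPath) : x ∈ p.support := by
  obtain ⟨p₀, hp₀, -⟩ := hT.connected.exists_path_of_dist r x
  obtain ⟨q, hq, -⟩ := hT.connected.exists_path_of_dist x y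
  have hq' : (x :: q.support.tail).Nodup := by rw [q.cons_tail_support]; exact hq.support_nodup
  have hdisj : p₀.support.Disjoint q.support.tail := by
    intro u hu hut
    have hux : u = x := by
      by_contra hne
      exact (hT.dist_lt_of_mem_support_of_isPath hp₀ hu hne).not_ge
        (hmin u (hT.mem_of_mem_support_of_isPath hS hx hy hq u (List.mem_of_mem_tail hut)))
    exact (List.nodup_cons.mp hq').1 (hux ▸ hut)
  have hp₀q : (p₀.append q).IsPath := by
    rw [Walk.isPath_def, Walk.support_append]
    exact hp₀.support_nodup.append (List.nodup_cons.mp hq').2 hdisj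
  rw [(hT.existsUnique_path r y).unique hp hp₀q]
  exact (Walk.mem_support_append_iff _ _).mpr (Or.inl p₀.end_mem_support)

lemma exists_mem_forall_mem_of_inter_nonempty (hT : T.IsTree) {α : Type*} (S : α → Set ι)
    {A : Finset α} (hA : A.Nonempty) (hne : ∀ a ∈ A, (S a).Nonempty)
    (hS : ∀ a ∈ A, (T.induce (S a)).Preconnected) :
    ∃ a ∈ A, ∃ x ∈ S a, ∀ b ∈ A, (S a ∩ S b).Nonempty → x ∈ S b := by
  classical
  obtain ⟨r⟩ := hT.connected.nonempty
  have : Nonempty ι := ⟨r⟩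
  have hgate : ∀ a ∈ A, ∃ x ∈ S a, ∀ y ∈ S a, T.dist r x ≤ T.dist r y := fun a ha =>
    ⟨_, Function.argminOn_mem _ _ (hne a ha), fun _ hy => Function.argminOn_le _ _ hy⟩
  choose! g hgS hgmin using hgate
  obtain ⟨a, ha, hamax⟩ := A.exists_max_image (fun a => T.dist r (g a)) hA
  refine ⟨a, ha, g a, hgS a ha, fun b hb ⟨y, hya, hyb⟩ => ?_⟩
  obtain ⟨p, hp, -⟩ := hT.connected.exists_path_of_dist r y
  have hxa : g a ∈ p.support :=
    hT.mem_support_of_isPath_of_forall_dist_le (hS a ha) (hgS a ha) (hgmin a ha) hya hp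
  have hxb : g b ∈ p.support :=
    hT.mem_support_of_isPath_of_forall_dist_le (hS b hb) (hgS b hb) (hgmin b hb) hyb hp
  rw [← p.take_spec hxb, Walk.mem_support_append_iff] at hxa
  rcases hxa with hxa | hxa
  · by_contra hab
    have hne : g a ≠ g b := fun h => hab (h ▸ hgS b hb)
    exact (hT.dist_lt_of_mem_support_of_isPath (hp.takeUntil hxb) hxa hne).not_ge (hamax b hb)
  · exact hT.mem_of_mem_support_of_isPath (hS b hb) (hgS b hb) hyb (hp.dropUntil hxb) _ hxa

theorem exists_pairwise_disjoint_or_exists_transversal (hT : T.IsTree) {α : Type*}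
    (S : α → Set ι) (ℓ : ℕ) {A : Finset α} (hne : ∀ a ∈ A, (S a).Nonempty)
    (hS : ∀ a ∈ A, (T.induce (S a)).Preconnected) :
    (∃ B ⊆ A, ℓ < B.card ∧ (B : Set α).Pairwise fun a b => Disjoint (S a) (S b)) ∨
      ∃ X : Finset ι, X.card ≤ ℓ ∧ ∀ a ∈ A, ∃ i ∈ X, i ∈ S a := by
  classical
  induction ℓ generalizing A with
  | zero =>
    rcases A.eq_empty_or_nonempty with rfl | ⟨a, ha⟩
    · exact Or.inr ⟨∅, by simp⟩
    · exact Or.inl ⟨{a}, by simpa using ha, by simp, by simp⟩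
  | succ m ih =>
    rcases A.eq_empty_or_nonempty with rfl | hA
    · exact Or.inr ⟨∅, by simp⟩
    obtain ⟨a, ha, x, hxa, hx⟩ := hT.exists_mem_forall_mem_of_inter_nonempty S hA hne hS
    set A' := A.filter fun b => Disjoint (S a) (S b)
    have hA' : A' ⊆ A := Finset.filter_subset _ _
    rcases ih (A := A') (fun b hb => hne b (hA' hb)) (fun b hb => hS b (hA' hb)) with
      ⟨B, hBA', hB, hBdisj⟩ | ⟨X, hX, hXA'⟩
    · have haB : a ∉ B := fun haB =>
        (hne a ha).ne_empty (disjoint_self.mp (Finset.mem_filter.mp (hBA' haB)).2)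
      refine Or.inl ⟨insert a B, Finset.insert_subset ha (hBA'.trans hA'), ?_, ?_⟩
      · rw [Finset.card_insert_of_notMem haB]; omega
      · rw [Finset.coe_insert]
        refine hBdisj.insert fun b hb _ => ?_
        have hab := (Finset.mem_filter.mp (hBA' hb)).2
        exact ⟨hab, hab.symm⟩
    · refine Or.inr ⟨insert x X, (Finset.card_insert_le _ _).trans (by omega), fun b hb => ?_⟩
      by_cases hab : Disjoint (S a) (S b)
      · obtain ⟨i, hi, hib⟩ := hXA' b (Finset.mem_filter.mpr ⟨hb, hab⟩)
        exact ⟨i, Finset.mem_insert_of_mem hi, hib⟩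
      · exact ⟨x, Finset.mem_insert_self _ _,
          hx b hb (Set.not_disjoint_iff_nonempty_inter.mp hab)⟩

end SimpleGraph.IsTree

namespace TreeDecomp

variable {V : Type u} {G : SimpleGraph V} (d : TreeDecomp G)

def trace (X : Set V) : Set d.ι := {i | (d.bag i ∩ X).Nonempty}

lemma trace_nonempty {X : Set V} (hX : X.Nonempty) : (d.trace X).Nonempty := by
  obtain ⟨v, hv⟩ := hX
  obtain ⟨i, hi⟩ := d.mem_bag v
  exact ⟨i, v, hi, hv⟩

lemma disjoint_of_disjoint_trace {X Y : Set V} (h : Disjoint (d.trace X) (d.trace Y)) :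
    Disjoint X Y := by
  refine Set.disjoint_left.mpr fun v hvX hvY => ?_
  obtain ⟨i, hi⟩ := d.mem_bag v
  exact Set.disjoint_left.mp h ⟨v, hi, hvX⟩ ⟨v, hi, hvY⟩

lemma preconnected_induce_trace {H : G.Subgraph} (hH : H.Preconnected) :
    (d.T.induce (d.trace H.verts)).Preconnected := by
  have hsub : ∀ v ∈ H.verts, {i | v ∈ d.bag i} ⊆ d.trace H.verts := fun v hv _ hi => ⟨v, hi, hv⟩
  have hbag : ∀ v (hv : v ∈ H.verts) i (hi : v ∈ d.bag i) j (hj : v ∈ d.bag j),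
      (d.T.induce (d.trace H.verts)).Reachable ⟨i, hsub v hv hi⟩ ⟨j, hsub v hv hj⟩ :=
    fun v hv i hi j hj =>
      ((d.bag_conn v).preconnected ⟨i, hi⟩ ⟨j, hj⟩).map (d.T.induceHomOfLE (hsub v hv)).toHom
  have hwalk : ∀ (a b : H.verts) (_ : H.coe.Walk a b) i (hi : (a : V) ∈ d.bag i) j
      (hj : (b : V) ∈ d.bag j),
      (d.T.induce (d.trace H.verts)).Reachable ⟨i, hsub a a.2 hi⟩ ⟨j, hsub b b.2 hj⟩ := by
    intro a b p
    induction p with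
    | nil => exact hbag _ (Subtype.prop _)
    | cons hadj _ ih =>
      intro i hi j hj
      obtain ⟨k, hk₁, hk₂⟩ := d.edge_bag (H.adj_sub hadj)
      exact (hbag _ (Subtype.prop _) i hi k hk₁).trans (ih k hk₂ j hj)
  rintro ⟨i, v, hvi, hv⟩ ⟨j, w, hwj, hw⟩
  obtain ⟨p⟩ := hH.coe ⟨v, hv⟩ ⟨w, hw⟩
  exact hwalk ⟨v, hv⟩ ⟨w, hw⟩ p i hvi j hwj

theorem exists_pairwise_disjoint_or_exists_transversal {k : ℕ}
    (hd : ∀ i, (d.bag i).ncard ≤ k + 1) {𝓗 : Finset G.Subgraph} (hconn : ∀ H ∈ 𝓗, H.Connected)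
    (ℓ : ℕ) :
    (∃ s ⊆ 𝓗, ℓ < s.card ∧
      (s : Set G.Subgraph).Pairwise fun H₁ H₂ => Disjoint H₁.verts H₂.verts) ∨
      ∃ Q : Set V, Q.ncard ≤ (k + 1) * ℓ ∧ ∀ H ∈ 𝓗, (H.verts ∩ Q).Nonempty := by
  rcases d.isTree.exists_pairwise_disjoint_or_exists_transversal (fun H => d.trace H.verts) ℓ
      (fun H hH => d.trace_nonempty (hconn H hH).nonempty)
      (fun H hH => d.preconnected_induce_trace (hconn H hH).preconnected) with
    ⟨s, hs, hℓ, hdisj⟩ | ⟨X, hX, hXhit⟩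
  · exact Or.inl ⟨s, hs, hℓ, hdisj.imp fun _ _ => d.disjoint_of_disjoint_trace⟩
  · refine Or.inr ⟨⋃ i ∈ X, d.bag i, ?_, fun H hH => ?_⟩
    · calc (⋃ i ∈ X, d.bag i).ncard ≤ ∑ i ∈ X, (d.bag i).ncard := X.set_ncard_biUnion_le _
        _ ≤ X.card * (k + 1) := Finset.sum_le_card_nsmul X _ _ fun i _ => hd i
        _ ≤ (k + 1) * ℓ := by rw [mul_comm]; gcongr
    · obtain ⟨i, hi, v, hvi, hv⟩ := hXhit H hH
      exact ⟨v, hv, Set.mem_biUnion hi hvi⟩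

end TreeDecomp

lemma treewidthLE_natCard {V : Type u} (G : SimpleGraph V) : TreewidthLE G (Nat.card V) := by
  refine ⟨⟨PUnit, ⊥, .of_subsingleton, fun _ => Set.univ, fun _ => ⟨⟨⟩, trivial⟩,
    fun _ _ _ => ⟨⟨⟩, trivial, trivial⟩, fun _ => ?_⟩, fun _ => ?_⟩
  · exact (@IsTree.of_subsingleton _ ⟨⟨⟨⟩, trivial⟩⟩ _ _).connected
  · simp

lemma treewidthLE_treewidth {V : Type u} [Finite V] (G : SimpleGraph V) :
    TreewidthLE G (treewidth G) :=
  Nat.sInf_mem (s := {k | TreewidthLE G k}) ⟨_, treewidthLE_natCard G⟩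

lemma natCast_le_mul_logb_two_add_one (n : ℕ) : (n : ℝ) ≤ n * Real.logb 2 (n + 1) := by
  rcases n.eq_zero_or_pos with rfl | hn
  · simp
  · have h2 : (2 : ℝ) ≤ n + 1 := by norm_cast; omega
    have : 1 ≤ Real.logb 2 (n + 1) :=
      (Real.le_logb_iff_rpow_le (by norm_num) (by positivity)).mpr (by simpa using h2)
    nlinarith [(n.cast_nonneg : (0 : ℝ) ≤ n)]

/-- Erdős–Pósa-type result: for a set `𝓗` of connected subgraphs of `G` and `ℓ ∈ ℕ`,
either there are more than `ℓ` pairwise vertex-disjoint members of `𝓗`, or some set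
`Q ⊆ V(G)` with `|Q| ≤ (tw(G)+1)·ℓ·log₂(ℓ+1)` meets every member of `𝓗`
(so that `G − Q` contains no member of `𝓗`). -/
theorem stmt_3 {V : Type} [Fintype V] (G : SimpleGraph V) (𝓗 : Set G.Subgraph)
    (hconn : ∀ H ∈ 𝓗, H.Connected) (ℓ : ℕ) :
    (∃ s : Finset G.Subgraph, ↑s ⊆ 𝓗 ∧ ℓ < s.card ∧
      (s : Set G.Subgraph).Pairwise fun H₁ H₂ => Disjoint H₁.verts H₂.verts) ∨
    (∃ Q : Set V,
      (Q.ncard : ℝ) ≤ ((treewidth G : ℝ) + 1) * ℓ * Real.logb 2 (ℓ + 1) ∧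
      ∀ H ∈ 𝓗, (H.verts ∩ Q).Nonempty) := by
  obtain ⟨d, hd⟩ := treewidthLE_treewidth G
  have h𝓗 : 𝓗.Finite := Set.toFinite 𝓗
  rcases d.exists_pairwise_disjoint_or_exists_transversal hd (𝓗 := h𝓗.toFinset)
      (by simpa using hconn) ℓ with ⟨s, hs, hℓ, hdisj⟩ | ⟨Q, hQ, hhit⟩
  · exact Or.inl ⟨s, Set.Finite.subset_toFinset.mp hs, hℓ, hdisj⟩
  · refine Or.inr ⟨Q, ?_, by simpa using hhit⟩
    calc (Q.ncard : ℝ) ≤ ((treewidth G : ℝ) + 1) * ℓ := by exact_mod_cast hQ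
      _ ≤ ((treewidth G : ℝ) + 1) * ℓ * Real.logb 2 (ℓ + 1) := by
        rw [mul_assoc]; gcongr; exact natCast_le_mul_logb_two_add_one ℓ
end

section
/- Let k, λ ∈ ℕ with λ ≥ k+1, and let G be a graph with treewidth at most k. Define G^(λ) to be the graph on V(G) where u and v are adjacent whenever there are λ pairwise internally disjoint (u,v)-paths in G. Then G^(λ) has treewidth at most k. -/
open SimpleGraph

universe u

/-- `G` has a `c`-tree-partition of width at most `ℓ`: an `H`-partition with `tw(H) ≤ c`
in which every part has at most `ℓ` vertices. -/
def TreePartWidthLE {V : Type u} (G : SimpleGraph V) (c ℓ : ℕ) : Prop :=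
  ∃ (ι : Type u) (H : SimpleGraph ι) (P : V → ι),
    TreewidthLE H c ∧
    (∀ ⦃u v : V⦄, G.Adj u v → P u = P v ∨ H.Adj (P u) (P v)) ∧
    ∀ i : ι, {v : V | P v = i}.ncard ≤ ℓ

/-- The `c`-tree-partition-width of `G`. -/
noncomputable def tpw {V : Type u} (G : SimpleGraph V) (c : ℕ) : ℕ :=
  sInf {ℓ | TreePartWidthLE G c ℓ}


/-- The graph `G^(λ)` on `V(G)`: `u` and `v` are adjacent whenever there are `λ`
pairwise internally disjoint `(u,v)`-paths in `G`. -/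
def powGraph {V : Type u} (G : SimpleGraph V) (lam : ℕ) : SimpleGraph V :=
  SimpleGraph.fromRel fun u v =>
    ∃ P : Fin lam → G.Walk u v,
      (∀ i, (P i).IsPath) ∧
      ∀ i j, i ≠ j → ∀ x, x ∈ (P i).support → x ∈ (P j).support → x = u ∨ x = v

/-
If `u` and `v` lie in no common bag, there is a tree edge `ij` with `u` in the bag of `i` but
not of `j`, and `v` only in bags on the `j`-side of `ij`. Then `bag i ∩ bag j` separates `u`
from `v` in `G`, so each of the `λ` internally disjoint `u`-`v` paths meets it in its own vertex,
and `bag i` contains these `λ` vertices together with `u`: more than `k + 1` vertices. Hence every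
tree-decomposition of `G` of width `k` is one of `G^(λ)`.
-/

namespace SimpleGraph

variable {ι : Type*} {T : SimpleGraph ι}

lemma Connected.reachable_deleteEdges_or (hT : T.Connected) (i j p : ι) :
    (T.deleteEdges {s(i, j)}).Reachable p i ∨ (T.deleteEdges {s(i, j)}).Reachable p j := by
  obtain ⟨w⟩ := hT p i
  suffices ∀ {a b : ι} (_ : T.Walk a b), (T.deleteEdges {s(i, j)}).Reachable b i ∨
      (T.deleteEdges {s(i, j)}).Reachable b j →
      (T.deleteEdges {s(i, j)}).Reachable a i ∨ (T.deleteEdges {s(i, j)}).Reachable a j from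
    this w (.inl .rfl)
  intro a b w hb
  induction w with
  | nil => exact hb
  | @cons a c _ hac _ ih =>
    by_cases he : s(a, c) = s(i, j)
    · rcases Sym2.eq_iff.mp he with ⟨rfl, -⟩ | ⟨rfl, -⟩
      · exact .inl .rfl
      · exact .inr .rfl
    · have hadj : (T.deleteEdges {s(i, j)}).Adj a c := by simpa [he] using hac
      exact (ih hb).imp hadj.reachable.trans hadj.reachable.trans

lemma IsAcyclic.mem_of_preconnected_induce (hT : T.IsAcyclic) {i j p q : ι} (hij : T.Adj i j)
    {S : Set ι} (hS : (T.induce S).Preconnected) (hp : p ∈ S) (hq : q ∈ S)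
    (hpi : (T.deleteEdges {s(i, j)}).Reachable p i)
    (hqj : (T.deleteEdges {s(i, j)}).Reachable q j) : i ∈ S ∧ j ∈ S := by
  obtain ⟨w⟩ := hS ⟨p, hp⟩ ⟨q, hq⟩
  have hpq : ¬ (T.deleteEdges {s(i, j)}).Reachable p q := fun h =>
    isBridge_iff.mp (isAcyclic_iff_forall_adj_isBridge.mp hT hij) (hpi.symm.trans (h.trans hqj))
  have hmem := (w.map (Embedding.induce S).toHom).mem_edges_of_not_reachable_deleteEdges hpq
  have hsupp : ∀ x ∈ (w.map (Embedding.induce S).toHom).support, x ∈ S := by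
    simp only [Walk.support_map, List.mem_map]
    rintro _ ⟨x, -, rfl⟩
    exact x.2
  exact ⟨hsupp _ (Walk.fst_mem_support_of_mem_edges _ hmem),
    hsupp _ (Walk.snd_mem_support_of_mem_edges _ hmem)⟩

lemma Reachable.exists_adj_mem_notMem_reachable_deleteEdges {S : Set ι} {a b : ι}
    (hab : T.Reachable a b) (ha : a ∈ S) (hb : b ∉ S) :
    ∃ x y, T.Adj x y ∧ x ∈ S ∧ y ∉ S ∧ (T.deleteEdges {s(x, y)}).Reachable y b := by
  classical
  obtain ⟨w, hw⟩ := hab.some.toPath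
  clear hab
  induction w with
  | nil => exact absurd ha hb
  | @cons a c _ hac w ih =>
    by_cases hc : c ∈ S
    · exact ih hc hb hw.of_cons
    · refine ⟨a, c, hac, ha, hc, reachable_deleteEdges_iff_exists_walk.mpr ⟨w, fun he => ?_⟩⟩
      exact ((Walk.cons_isPath_iff _ _).mp hw).2 (Walk.fst_mem_support_of_mem_edges _ he)

variable {V : Type*} {G : SimpleGraph V}

lemma card_le_ncard_of_internallyDisjoint {S : Set V} (hS : S.Finite) {u v : V}
    (hu : u ∉ S) (hv : v ∉ S) {lam : ℕ} (P : Fin lam → G.Walk u v)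
    (hdisj : ∀ i j, i ≠ j → ∀ x, x ∈ (P i).support → x ∈ (P j).support → x = u ∨ x = v)
    (hmeet : ∀ m, ∃ x ∈ (P m).support, x ∈ S) : lam ≤ S.ncard := by
  choose f hfP hfS using hmeet
  have hinj : Function.Injective fun m => (⟨f m, hfS m⟩ : S) := by
    intro m m' hmm
    by_contra hne
    have hf : f m = f m' := congrArg Subtype.val hmm
    rcases hdisj m m' hne (f m) (hfP m) (hf ▸ hfP m') with h | h
    · exact hu (h ▸ hfS m)
    · exact hv (h ▸ hfS m)
  have := hS.to_subtype
  simpa [Nat.card_coe_set_eq] using Nat.card_le_card_of_injective _ hinj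

end SimpleGraph

namespace TreeDecomp

variable {V : Type u} {G : SimpleGraph V} (d : TreeDecomp G)

lemma mem_bag_of_reachable_deleteEdges {i j p q : d.ι} (hij : d.T.Adj i j) {x : V}
    (hxp : x ∈ d.bag p) (hxq : x ∈ d.bag q) (hpi : (d.T.deleteEdges {s(i, j)}).Reachable p i)
    (hqj : (d.T.deleteEdges {s(i, j)}).Reachable q j) : x ∈ d.bag i ∧ x ∈ d.bag j :=
  d.isTree.isAcyclic.mem_of_preconnected_induce hij (d.bag_conn x).preconnected hxp hxq hpi hqj

lemma exists_mem_support_inter_bag {i j : d.ι} (hij : d.T.Adj i j) {a b : V} (w : G.Walk a b)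
    (ha : ∃ p, (d.T.deleteEdges {s(i, j)}).Reachable p i ∧ a ∈ d.bag p)
    (hb : ∃ q, (d.T.deleteEdges {s(i, j)}).Reachable q j ∧ b ∈ d.bag q) :
    ∃ x ∈ w.support, x ∈ d.bag i ∧ x ∈ d.bag j := by
  induction w with
  | nil =>
    obtain ⟨p, hpi, hap⟩ := ha
    obtain ⟨q, hqj, haq⟩ := hb
    exact ⟨_, Walk.start_mem_support _, d.mem_bag_of_reachable_deleteEdges hij hap haq hpi hqj⟩
  | @cons a c _ hac _ ih =>
    obtain ⟨p, hap, hcp⟩ := d.edge_bag hac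
    rcases d.isTree.connected.reachable_deleteEdges_or i j p with hpi | hpj
    · obtain ⟨x, hx, hxij⟩ := ih ⟨p, hpi, hcp⟩ hb
      exact ⟨x, List.mem_cons_of_mem _ hx, hxij⟩
    · obtain ⟨q, hqi, haq⟩ := ha
      exact ⟨a, Walk.start_mem_support _, d.mem_bag_of_reachable_deleteEdges hij haq hap hqi hpj⟩

lemma exists_adj_separating {u v : V} (huv : ∀ i, u ∈ d.bag i → v ∉ d.bag i) :
    ∃ i j, d.T.Adj i j ∧ u ∈ d.bag i ∧ u ∉ d.bag j ∧
      ∃ q, (d.T.deleteEdges {s(i, j)}).Reachable q j ∧ v ∈ d.bag q := by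
  obtain ⟨p, hup⟩ := d.mem_bag u
  obtain ⟨q, hvq⟩ := d.mem_bag v
  obtain ⟨i, j, hij, hui, huj, hjq⟩ :=
    (d.isTree.connected p q).exists_adj_mem_notMem_reachable_deleteEdges
      (S := {p | u ∈ d.bag p}) hup (fun huq => huv q huq hvq)
  exact ⟨i, j, hij, hui, huj, q, hjq.symm, hvq⟩

lemma exists_mem_bag_and_mem_bag [Finite V] {k : ℕ} (hd : ∀ i, (d.bag i).ncard ≤ k + 1)
    {lam : ℕ} (hlam : k + 1 ≤ lam) {u v : V} (P : Fin lam → G.Walk u v)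
    (hdisj : ∀ i j, i ≠ j → ∀ x, x ∈ (P i).support → x ∈ (P j).support → x = u ∨ x = v) :
    ∃ i, u ∈ d.bag i ∧ v ∈ d.bag i := by
  by_contra! huv
  obtain ⟨i, j, hij, hui, huj, hv⟩ := d.exists_adj_separating huv
  have hsep : ∀ m, ∃ x ∈ (P m).support, x ∈ d.bag i ∩ d.bag j := fun m =>
    d.exists_mem_support_inter_bag hij (P m) ⟨i, .rfl, hui⟩ hv
  have hcard : lam ≤ (d.bag i ∩ d.bag j).ncard :=
    card_le_ncard_of_internallyDisjoint (Set.toFinite _) (fun h => huj h.2)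
      (fun h => huv i hui h.1) P hdisj hsep
  have hlt : (d.bag i ∩ d.bag j).ncard < (d.bag i).ncard :=
    Set.ncard_lt_ncard (Set.inter_subset_left.ssubset_of_not_subset fun h => huj (h hui).2)
      (Set.toFinite _)
  have := hd i
  omega

end TreeDecomp

/-- `Set.ncard` of an infinite set is `0`, so a single bag holding all of `V` meets every width
bound. -/
lemma treewidthLE_of_infinite {V : Type u} [Infinite V] (G : SimpleGraph V) (k : ℕ) :
    TreewidthLE G k :=
  ⟨⟨PUnit, ⊥, .of_subsingleton, fun _ => Set.univ, fun _ => ⟨.unit, trivial⟩,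
      fun _ _ _ => ⟨.unit, trivial, trivial⟩,
      fun v => @Connected.of_subsingleton _ _ ⟨⟨.unit, Set.mem_univ v⟩⟩ _⟩,
    fun _ => by simp [Set.Infinite.ncard Set.infinite_univ]⟩

/-- If `λ ≥ k+1` and `G` has treewidth at most `k`, then `G^(λ)` has treewidth at most `k`. -/
theorem stmt_4 {V : Type} (G : SimpleGraph V) (k lam : ℕ) (hlam : k + 1 ≤ lam)
    (hG : TreewidthLE G k) : TreewidthLE (powGraph G lam) k := by
  cases finite_or_infinite V with
  | inr _ => exact treewidthLE_of_infinite _ k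
  | inl _ =>
    obtain ⟨d, hd⟩ := hG
    refine ⟨⟨d.ι, d.T, d.isTree, d.bag, d.mem_bag, fun u v huv => ?_, d.bag_conn⟩, hd⟩
    rcases (fromRel_adj _ u v).mp huv |>.2 with ⟨P, -, hdisj⟩ | ⟨P, -, hdisj⟩
    · exact d.exists_mem_bag_and_mem_bag hd hlam P hdisj
    · exact (d.exists_mem_bag_and_mem_bag hd hlam P hdisj).imp fun _ => And.symm
end

section
/- Define graphs G_{c,ℓ} recursively by G_{1,ℓ} = P_{ℓ+1} (the path on ℓ+1 vertices) and G_{c,ℓ} obtained from ℓ disjoint copies of G_{c−1,ℓ} by adding one dominant vertex. Then for every ℓ-partition of G_{c,ℓ} (a partition of the vertex set into parts each of size at most ℓ), there exists a clique of size c+1 in G_{c,ℓ} whose vertices lie in c+1 pairwise distinct parts. -/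
open SimpleGraph

universe u

/-- The graph obtained from `ℓ` vertex-disjoint copies of `G` by adding one dominant
vertex (`none`) adjacent to all other vertices. -/
def addDomCopies {V : Type u} (G : SimpleGraph V) (ℓ : ℕ) :
    SimpleGraph (Option (Fin ℓ × V)) where
  Adj x y :=
    match x, y with
    | none, none => False
    | none, some _ => True
    | some _, none => True
    | some p, some q => p.1 = q.1 ∧ G.Adj p.2 q.2
  symm := by
    constructor
    rintro (_ | p) (_ | q) h
    · exact h
    · trivial
    · trivial
    · exact ⟨h.1.symm, h.2.symm⟩
  loopless := by
    constructor
    rintro (_ | p) h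
    · exact h
    · exact G.irrefl h.2

/-- Vertex type of the graph `G_{c+1,ℓ}`. -/
def GV (ℓ : ℕ) : ℕ → Type
  | 0 => Fin (ℓ + 1)
  | c + 1 => Option (Fin ℓ × GV ℓ c)

/-- The graphs `G_{c,ℓ}` (indexed here so that `Gfam ℓ c = G_{c+1,ℓ}`):
`G_{1,ℓ}` is the path on `ℓ+1` vertices, and `G_{c,ℓ}` is obtained from `ℓ` disjoint
copies of `G_{c−1,ℓ}` by adding one dominant vertex. -/
def Gfam (ℓ : ℕ) : (c : ℕ) → SimpleGraph (GV ℓ c)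
  | 0 => SimpleGraph.pathGraph (ℓ + 1)
  | c + 1 => addDomCopies (Gfam ℓ c) ℓ

/-!
Induction on `c`. On the path `P_{ℓ+1}` a colouring with classes of size at most `ℓ` is not
constant, so some edge is rainbow. In `G_{c+1,ℓ}` the class of the dominant vertex has at most
`ℓ` elements, one of them the dominant vertex itself, so it misses one of the `ℓ` copies of
`G_{c,ℓ}` entirely; a rainbow `(c+1)`-clique of that copy together with the dominant vertex is a
rainbow `(c+2)`-clique.
-/

instance GV.instFinite (ℓ : ℕ) : (c : ℕ) → Finite (GV ℓ c)
  | 0 => inferInstanceAs (Finite (Fin (ℓ + 1)))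
  | c + 1 => haveI := GV.instFinite ℓ c; inferInstanceAs (Finite (Option (Fin ℓ × GV ℓ c)))

theorem SimpleGraph.Adj.exists_isNClique_two_injOn {V ι : Type*} {G : SimpleGraph V}
    {P : V → ι} {a b : V} (hab : G.Adj a b) (hP : P a ≠ P b) :
    ∃ s : Finset V, G.IsNClique 2 s ∧ Set.InjOn P s := by
  classical
  refine ⟨{a, b}, (isNClique_singleton.2 rfl).insert (by simpa using hab), ?_⟩
  rw [Finset.coe_pair, Set.injOn_pair]
  exact fun h => absurd h hP

theorem pathGraph_exists_adj_ne {ι : Type*} {n : ℕ} (P : Fin (n + 1) → ι)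
    (h : ∀ i, {v | P v = i}.ncard ≤ n) : ∃ a b, (pathGraph (n + 1)).Adj a b ∧ P a ≠ P b := by
  by_contra! hconst
  have hall : ∀ v, P v = P 0 :=
    Fin.induction rfl fun k ih => (hconst _ _ (pathGraph_adj.2 (Or.inl (by simp)))).symm.trans ih
  have hfiber : {v | P v = P 0} = Set.univ := Set.eq_univ_of_forall hall
  have := h (P 0)
  rw [hfiber, Set.ncard_univ, Nat.card_fin] at this
  omega

namespace addDomCopies

variable {V : Type*} (G : SimpleGraph V) (ℓ : ℕ)

def copy (j : Fin ℓ) : G ↪g addDomCopies G ℓ where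
  toFun v := some (j, v)
  inj' _ _ h := by simpa using h
  map_rel_iff' := and_iff_right rfl

variable {G ℓ}

theorem isNClique_insert_none_map_copy [DecidableEq V] {n : ℕ} {s : Finset V}
    (hs : G.IsNClique n s) (j : Fin ℓ) :
    (addDomCopies G ℓ).IsNClique (n + 1) (insert none (s.map (copy G ℓ j).toEmbedding)) := by
  refine IsNClique.insert ⟨?_, (Finset.card_map _).trans hs.2⟩ ?_
  · rw [Finset.coe_map]
    rintro _ ⟨a, ha, rfl⟩ _ ⟨b, hb, rfl⟩ hab
    exact (copy G ℓ j).map_adj_iff.2 (hs.1 ha hb (ne_of_apply_ne _ hab))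
  · simp only [Finset.mem_map]
    rintro _ ⟨v, -, rfl⟩
    trivial

theorem injOn_insert_none_map_copy [DecidableEq V] {ι : Type*} {P : Option (Fin ℓ × V) → ι}
    {s : Finset V} {j : Fin ℓ} (hs : Set.InjOn (P ∘ copy G ℓ j) s) (hj : ∀ v, P (some (j, v)) ≠ P none) :
    Set.InjOn P (insert none (s.map (copy G ℓ j).toEmbedding) : Finset _) := by
  rw [Finset.coe_insert, Finset.coe_map, Set.injOn_insert (by simp [copy])]
  refine ⟨hs.image_of_comp, ?_⟩
  rintro ⟨_, ⟨v, -, rfl⟩, hv⟩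
  exact hj v hv

theorem exists_copy_forall_apply_ne_apply_none [Finite V] {ι : Type*} (P : Option (Fin ℓ × V) → ι)
    (h : {v | P v = P none}.ncard ≤ ℓ) : ∃ j : Fin ℓ, ∀ v, P (some (j, v)) ≠ P none := by
  by_contra! hcopies
  choose f hf using hcopies
  let g : Option (Fin ℓ) → {v | P v = P none} := fun o =>
    ⟨o.map fun j => (j, f j), by cases o <;> simp [hf]⟩
  have hg : Function.Injective g := fun a b hab =>
    Option.map_injective (fun _ _ h => congrArg Prod.fst h) (congrArg Subtype.val hab)
  have := Nat.card_le_card_of_injective g hg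
  rw [Nat.card_coe_set_eq, Finite.card_option, Nat.card_fin] at this
  omega

end addDomCopies

theorem stmt_8_general (c ℓ : ℕ) {ι : Type} (P : GV ℓ c → ι)
    (hwidth : ∀ i : ι, {v : GV ℓ c | P v = i}.ncard ≤ ℓ) :
    ∃ s : Finset (GV ℓ c), (Gfam ℓ c).IsNClique (c + 2) s ∧ Set.InjOn P ↑s := by
  classical
  induction c with
  | zero =>
    obtain ⟨a, b, hab, hP⟩ := pathGraph_exists_adj_ne P hwidth
    exact hab.exists_isNClique_two_injOn hP
  | succ c ih =>
    obtain ⟨j, hj⟩ := addDomCopies.exists_copy_forall_apply_ne_apply_none P (hwidth _)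
    let e := addDomCopies.copy (Gfam ℓ c) ℓ j
    obtain ⟨s, hs, hinj⟩ := ih (P ∘ e) fun i =>
      (Set.ncard_le_ncard_of_injOn e (fun _ h => h) e.injective.injOn).trans (hwidth i)
    exact ⟨_, addDomCopies.isNClique_insert_none_map_copy hs j,
      addDomCopies.injOn_insert_none_map_copy hinj hj⟩

/-- For every `ℓ`-partition of `G_{c,ℓ}` (here `Gfam ℓ c = G_{c+1,ℓ}`, i.e. every
partition of the vertex set into parts of size at most `ℓ`), there is a clique of
size `c+1` (here `(c+1)+1`) whose vertices lie in pairwise distinct parts. -/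
theorem stmt_8 (c ℓ : ℕ) (hℓ : 1 ≤ ℓ) {ι : Type} (P : GV ℓ c → ι)
    (hwidth : ∀ i : ι, {v : GV ℓ c | P v = i}.ncard ≤ ℓ) :
    ∃ s : Finset (GV ℓ c), (Gfam ℓ c).IsNClique (c + 2) s ∧ Set.InjOn P ↑s :=
  stmt_8_general c ℓ P hwidth
end

section
/- Let G be a graph in which every block (maximal 2-connected subgraph or bridge or isolated vertex) is a triangle, a single edge, or a single vertex. Then G has a T-partition of width at most 2 for some tree T; in particular every K_{2,2}-minor-free graph G satisfies tpw₁(G) ≤ 2. -/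
open SimpleGraph

universe u

/-- `H` is a minor of `G` (branch-set definition). -/
def IsMinor {W V : Type u} (H : SimpleGraph W) (G : SimpleGraph V) : Prop :=
  ∃ B : W → Set V,
    (∀ w, (B w).Nonempty) ∧
    (∀ w, (G.induce (B w)).Connected) ∧
    (Pairwise fun w₁ w₂ => Disjoint (B w₁) (B w₂)) ∧
    ∀ ⦃w₁ w₂⦄, H.Adj w₁ w₂ → ∃ u ∈ B w₁, ∃ v ∈ B w₂, G.Adj u v

/-- The set `B` induces a connected subgraph of `G` with no cutvertex. -/
def ConnNoCutVtx {V : Type u} (G : SimpleGraph V) (B : Set V) : Prop :=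
  (G.induce B).Connected ∧ ∀ v ∈ B, (G.induce (B \ {v})).Preconnected

/-- `B` is (the vertex set of) a block of `G`: a maximal connected subgraph with no
cutvertex (a maximal 2-connected subgraph, a bridge, or an isolated vertex). -/
def IsBlock {V : Type u} (G : SimpleGraph V) (B : Set V) : Prop :=
  B.Nonempty ∧ ConnNoCutVtx G B ∧ ∀ B' : Set V, B ⊆ B' → ConnNoCutVtx G B' → B' = B

namespace Stmt11


variable {V : Type} {G : SimpleGraph V}

lemma getVert_eq_support_getElem {u v : V} (w : G.Walk u v) (i : ℕ) (hi : i < w.support.length) :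
    w.support[i] = w.getVert i := by
  induction w generalizing i with
  | nil =>
    simp only [Walk.support_nil, List.length_singleton] at hi
    interval_cases i
    · simp [Walk.getVert_zero]
  | cons h p ih =>
    cases i with
    | zero => simp [Walk.getVert_zero]
    | succ n =>
      simp only [Walk.support_cons, List.getElem_cons_succ, Walk.getVert_cons_succ]
      exact ih n (by simp only [Walk.support_cons, List.length_cons] at hi; omega)

lemma tail_getElem_eq_getVert {u v : V} (w : G.Walk u v) {n : ℕ} (h1 : 1 ≤ n)
    (h2 : n ≤ w.length) :
    w.support.tail[n-1]'(by rw [List.length_tail, w.length_support]; omega) = w.getVert n := by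
  have e1 : w.support[n]'(by rw [w.length_support]; omega) = w.getVert n :=
    getVert_eq_support_getElem w n (by rw [w.length_support]; omega)
  rw [← e1]
  have hcons : w.support = u :: w.support.tail := w.support_eq_cons
  calc w.support.tail[n-1]'(by rw [List.length_tail, w.length_support]; omega)
      = (u :: w.support.tail)[n-1+1]'(by
          simp only [List.length_cons, List.length_tail, w.length_support]; omega) := by
        rw [List.getElem_cons_succ]
    _ = w.support[n]'(by rw [w.length_support]; omega) := by
        congr 1
        · exact hcons.symm
        · omega

lemma getVert_mem_tail {u v : V} (w : G.Walk u v) {n : ℕ} (h1 : 1 ≤ n) (h2 : n ≤ w.length) :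
    w.getVert n ∈ w.support.tail := by
  rw [← tail_getElem_eq_getVert w h1 h2]
  exact List.getElem_mem _

lemma cycle_getVert_inj {v : V} {c : G.Walk v v} (hc : c.IsCycle) {i j : ℕ}
    (hi1 : 1 ≤ i) (hi2 : i ≤ c.length) (hj1 : 1 ≤ j) (hj2 : j ≤ c.length)
    (h : c.getVert i = c.getVert j) : i = j := by
  have e1 := tail_getElem_eq_getVert c hi1 hi2
  have e2 := tail_getElem_eq_getVert c hj1 hj2
  rw [← e1, ← e2] at h
  have := (hc.support_nodup.getElem_inj_iff).mp h
  omega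

lemma mem_tail_of_closed {v x : V} (w : G.Walk v v) (hw : ¬ w.Nil) (hx : x ∈ w.support) :
    x ∈ w.support.tail := by
  have hl : w.length ≠ 0 := by rwa [Walk.nil_iff_length_eq] at hw
  obtain ⟨n, hn, hnle⟩ := Walk.mem_support_iff_exists_getVert.mp hx
  rcases Nat.eq_zero_or_pos n with rfl | hpos
  · rw [Walk.getVert_zero] at hn
    subst hn
    have h2 := getVert_mem_tail w (n := w.length) (by omega) le_rfl
    rwa [w.getVert_length] at h2
  · rw [← hn]; exact getVert_mem_tail w hpos hnle

lemma isPath_concat {a b c : V} {p : G.Walk a b} (hp : p.IsPath) (hc : c ∉ p.support)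
    (h : G.Adj b c) : (p.concat h).IsPath := by
  rw [← Walk.isPath_reverse_iff, Walk.reverse_concat]
  exact Walk.IsPath.cons (by rwa [Walk.isPath_reverse_iff])
    (by rwa [Walk.support_reverse, List.mem_reverse])

lemma reach_induce {S : Set V} {a b : V} (w : G.Walk a b) (hw : ∀ x ∈ w.support, x ∈ S) :
    ∀ (ha : a ∈ S) (hb : b ∈ S), (G.induce S).Reachable ⟨a, ha⟩ ⟨b, hb⟩ := by
  induction w with
  | nil => intro _ _; rfl
  | @cons u x b h p ih =>
    intro ha hb
    have hx : x ∈ S := hw x (by simp)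
    have hadj : (G.induce S).Adj ⟨u, ha⟩ ⟨x, hx⟩ := by
      simp [SimpleGraph.comap_adj]
      exact h
    exact hadj.reachable.trans (ih (fun y hy => hw y (by simp [hy])) hx hb)

lemma chain_walk {a : V} (L : List V) (hL : List.Chain G.Adj a L) :
    ∀ u ∈ a :: L, ∃ w : G.Walk a u, ∀ x ∈ w.support, x ∈ a :: L := by
  induction L generalizing a with
  | nil =>
    intro u hu
    simp at hu
    subst hu
    exact ⟨Walk.nil, by simp⟩
  | cons b t ih =>
    intro u hu
    rcases List.mem_cons.mp hu with rfl | hu'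
    · exact ⟨Walk.nil, by simp⟩
    · rcases List.chain_cons.mp hL with ⟨hab, hbt⟩
      obtain ⟨w, hw⟩ := ih hbt u hu'
      refine ⟨Walk.cons hab w, ?_⟩
      intro x hx
      have : x = a ∨ x ∈ w.support := by simpa using hx
      rcases this with rfl | hx'
      · exact List.mem_cons_self
      · exact List.mem_cons_of_mem _ (hw x hx')

lemma chain_connected (L : List V) (hne : L ≠ []) (hc : L.Chain' G.Adj) :
    (G.induce {x | x ∈ L}).Connected := by
  obtain ⟨a, t, rfl⟩ := List.exists_cons_of_ne_nil hne
  rw [SimpleGraph.connected_iff]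
  constructor
  · intro ⟨u, hu⟩ ⟨v, hv⟩
    have hch : List.Chain G.Adj a t := hc
    obtain ⟨w1, hw1⟩ := chain_walk t hch u hu
    obtain ⟨w2, hw2⟩ := chain_walk t hch v hv
    exact (reach_induce w1 (fun x hx => hw1 x hx) (List.mem_cons_self) hu).symm.trans
      (reach_induce w2 (fun x hx => hw2 x hx) (List.mem_cons_self) hv)
  · exact ⟨⟨a, List.mem_cons_self⟩⟩


def Rch (G : SimpleGraph V) (S : Set V) : V → V → Prop :=
  Relation.ReflTransGen (fun a b => a ∈ S ∧ b ∈ S ∧ G.Adj a b)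

lemma Rch.refl {S : Set V} {a : V} : Rch G S a a := Relation.ReflTransGen.refl

lemma Rch.symm {S : Set V} {a b : V} (h : Rch G S a b) : Rch G S b a :=
  (@Relation.ReflTransGen.symmetric _ _ ⟨fun _ _ h => ⟨h.2.1, h.1, h.2.2.symm⟩⟩).symm _ _ h

lemma Rch.trans {S : Set V} {a b c : V} (h : Rch G S a b) (h' : Rch G S b c) : Rch G S a c :=
  Relation.ReflTransGen.trans h h'

lemma rch_walk {S : Set V} {a b : V} (h : Rch G S a b) :
    ∃ w : G.Walk a b, ∀ x ∈ w.support, x = a ∨ x ∈ S := by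
  induction h with
  | refl => exact ⟨Walk.nil, by simp⟩
  | tail _ step ih =>
    obtain ⟨w, hw⟩ := ih
    refine ⟨w.concat step.2.2, ?_⟩
    intro x hx
    rw [Walk.support_concat] at hx
    rcases List.mem_append.mp hx with hx' | hx2
    · exact hw x hx'
    · simp only [List.mem_singleton] at hx2; subst hx2; exact Or.inr step.2.1

lemma rch_comp {S : Set V} {x a b : V} (h : Rch G S a b) (hxa : Rch G S x a) :
    Rch G {y | y ∈ S ∧ Rch G S x y} a b := by
  induction h with
  | refl => exact Rch.refl
  | @tail c d hac step ih =>
    refine ih.tail ⟨⟨step.1, hxa.trans hac⟩, ⟨step.2.1, (hxa.trans hac).tail step⟩, step.2.2⟩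

lemma last_exit {S R : Set V} {r v : V} (h : Rch G S r v) (hv : v ∉ R) (hr : r ∈ R) :
    ∃ u, u ∈ S ∧ u ∉ R ∧ (∃ r' ∈ R, G.Adj r' u) ∧ Rch G (S \ R) u v := by
  induction h with
  | refl => exact absurd hr hv
  | @tail y w hry step ih =>
    by_cases hy : y ∈ R
    · exact ⟨w, step.2.1, hv, ⟨y, hy, step.2.2⟩, Rch.refl⟩
    · obtain ⟨u, hu1, hu2, hu3, hu4⟩ := ih hy
      exact ⟨u, hu1, hu2, hu3, hu4.tail ⟨⟨step.1, hy⟩, ⟨step.2.1, hv⟩, step.2.2⟩⟩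

lemma l4 {S R C : Set V} {r v : V}
    (hClose : ∀ a b, a ∈ C → b ∈ S → G.Adj a b → b ∈ R ∨ b ∈ C)
    (h : Rch G S r v) (hr : r ∈ R) (hv : v ∉ C) :
    ∃ r' ∈ R, Rch G (S \ C) r' v := by
  induction h with
  | refl => exact ⟨r, hr, Rch.refl⟩
  | @tail y w hry step ih =>
    by_cases hy : y ∈ C
    · rcases hClose y w hy step.2.1 step.2.2 with hw | hw
      · exact ⟨w, hw, Rch.refl⟩
      · exact absurd hw hv
    · obtain ⟨r', hr', hrch⟩ := ih hy
      exact ⟨r', hr', hrch.tail ⟨⟨step.1, hy⟩, ⟨step.2.1, hv⟩, step.2.2⟩⟩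

def pTree (f : ℕ → ℕ) : SimpleGraph ℕ where
  Adj i j := i ≠ j ∧ ((0 < i ∧ f i = j) ∨ (0 < j ∧ f j = i))
  symm := ⟨fun i j h => ⟨h.1.symm, h.2.symm⟩⟩
  loopless := ⟨fun i h => h.1 rfl⟩

lemma pTree_isTree {f : ℕ → ℕ} (hf : ∀ i, 0 < i → f i < i) : (pTree f).IsTree := by
  constructor
  · rw [SimpleGraph.connected_iff]
    refine ⟨fun i j => ?_, ⟨0⟩⟩
    have key : ∀ i, (pTree f).Reachable i 0 := by
      intro i
      induction i using Nat.strong_induction_on with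
      | _ i ih =>
        rcases Nat.eq_zero_or_pos i with h0 | h0
        · subst h0; rfl
        · have hadj : (pTree f).Adj i (f i) := ⟨(hf i h0).ne', Or.inl ⟨h0, rfl⟩⟩
          exact hadj.reachable.trans (ih (f i) (hf i h0))
    exact (key i).trans (key j).symm
  · intro v c hc
    classical
    have hvsup : v ∈ c.support := c.start_mem_support
    have hnem : c.support.toFinset.Nonempty := ⟨v, by simpa using hvsup⟩
    set m := c.support.toFinset.max' hnem with hm
    have hmmem : m ∈ c.support := by
      have := c.support.toFinset.max'_mem hnem
      simpa using this
    have hmax : ∀ x ∈ c.support, x ≤ m := fun x hx =>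
      c.support.toFinset.le_max' x (by simpa using hx)
    set c' := c.rotate _ hmmem with hc'def
    have hc' : c'.IsCycle := Walk.IsCycle.rotate hmmem hc
    have hlen : c'.length = c.length := by
      have h1 := (SimpleGraph.Walk.rotate_darts c _ hmmem).perm.length_eq
      simpa [SimpleGraph.Walk.length_darts, hc'def] using h1
    have h3 : 3 ≤ c'.length := hc'.three_le_length
    have hsub : ∀ x ∈ c'.support, x ∈ c.support := by
      intro x hx
      have hnil : ¬ c'.Nil := by rw [Walk.nil_iff_length_eq]; omega
      have hx' := mem_tail_of_closed c' hnil hx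
      have hperm := SimpleGraph.Walk.support_rotate c _ hmmem
      exact List.mem_of_mem_tail ((hperm.perm.mem_iff).1 hx')
    have hadj1 : (pTree f).Adj m (c'.getVert 1) := by
      have h := c'.adj_getVert_succ (i := 0) (by omega)
      simpa using h
    have hadj2 : (pTree f).Adj (c'.getVert (c'.length - 1)) m := by
      have h := c'.adj_getVert_succ (i := c'.length - 1) (by omega)
      have h2 : c'.getVert (c'.length - 1 + 1) = m := by
        rw [show c'.length - 1 + 1 = c'.length by omega, Walk.getVert_length]
      rwa [h2] at h
    have hne : c'.getVert 1 ≠ c'.getVert (c'.length - 1) := by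
      intro h
      have := cycle_getVert_inj hc' (by omega) (by omega) (by omega) (by omega) h
      omega
    have hle1 : c'.getVert 1 ≤ m :=
      hmax _ (hsub _ (Walk.mem_support_iff_exists_getVert.mpr ⟨1, rfl, by omega⟩))
    have hle2 : c'.getVert (c'.length - 1) ≤ m :=
      hmax _ (hsub _ (Walk.mem_support_iff_exists_getVert.mpr ⟨c'.length - 1, rfl, by omega⟩))
    have hfm1 : f m = c'.getVert 1 := by
      rcases hadj1.2 with ⟨hm0, hfm⟩ | ⟨ha0, hfa⟩
      · exact hfm
      · exfalso; have := hf _ ha0; omega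
    have hfm2 : f m = c'.getVert (c'.length - 1) := by
      rcases hadj2.2 with ⟨hb0, hfb⟩ | ⟨hm0, hfm⟩
      · exfalso; have := hf _ hb0; omega
      · exact hfm
    exact hne (hfm1 ▸ hfm2 ▸ rfl)


lemma no4cycle (HC : ∀ (v : V) (c : G.Walk v v), c.IsCycle → c.length = 3)
    {a b c d : V} (hab : G.Adj a b) (hbc : G.Adj b c) (hcd : G.Adj c d)
    (hda : G.Adj d a) (hac : a ≠ c) (hbd : b ≠ d) : False := by
  have p1 : (Walk.cons hda Walk.nil : G.Walk d a).IsPath :=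
    Walk.IsPath.nil.cons (by simp [hda.ne])
  have p2 : (Walk.cons hcd (Walk.cons hda Walk.nil) : G.Walk c a).IsPath :=
    p1.cons (by simp [hcd.ne, Ne.symm hac])
  have p3 : (Walk.cons hbc (Walk.cons hcd (Walk.cons hda Walk.nil)) : G.Walk b a).IsPath :=
    p2.cons (by simp [hbc.ne, hbd, hab.ne'])
  have hcyc : (Walk.cons hab (Walk.cons hbc (Walk.cons hcd (Walk.cons hda Walk.nil)))).IsCycle := by
    rw [Walk.cons_isCycle_iff]
    refine ⟨p3, ?_⟩
    intro hmem
    simp only [Walk.edges_cons, Walk.edges_nil, List.mem_cons, List.not_mem_nil, or_false,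
      Sym2.eq_iff] at hmem
    have n1 := hab.ne; have n2 := hab.ne'; have n3 := hbc.ne; have n4 := hbc.ne'
    have n5 := hcd.ne; have n6 := hcd.ne'; have n7 := hda.ne; have n8 := hda.ne'
    have n9 := Ne.symm hac; have n10 := Ne.symm hbd
    tauto
  have hlen := HC a _ hcyc
  simp [Walk.length_cons] at hlen

lemma keyA [DecidableEq V] (HC : ∀ (v : V) (c : G.Walk v v), c.IsCycle → c.length = 3)
    {S' R : Set V} (hdisj : ∀ z ∈ S', z ∉ R)
    {x y r r' : V} (hxy : x ≠ y) (hx : x ∈ S') (hy : y ∈ S') (hr : r ∈ R) (hr' : r' ∈ R)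
    (hrx : G.Adj r x) (hry : G.Adj r' y) (hclq : r ≠ r' → G.Adj r r')
    (hreach : Rch G S' x y) : r = r' ∧ G.Adj x y := by
  obtain ⟨w0, hw0⟩ := rch_walk hreach
  have hw0' : ∀ z ∈ w0.support, z ∈ S' := by
    intro z hz
    rcases hw0 z hz with rfl | h
    · exact hx
    · exact h
  have hpP : w0.bypass.IsPath := w0.bypass_isPath
  set p := w0.bypass with hp
  have hpS : ∀ z ∈ p.support, z ∈ S' := fun z hz => hw0' z (w0.support_bypass_subset hz)
  have hrp : r ∉ p.support := fun h => hdisj _ (hpS _ h) hr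
  have hr'p : r' ∉ p.support := fun h => hdisj _ (hpS _ h) hr'
  have hxS := hpS x p.start_mem_support
  have hyS := hpS y p.end_mem_support
  by_cases hrr : r = r'
  · subst hrr
    have hqP : (p.concat hry.symm).IsPath := isPath_concat hpP hrp hry.symm
    have hcyc : (Walk.cons hrx (p.concat hry.symm)).IsCycle := by
      rw [Walk.cons_isCycle_iff]
      refine ⟨hqP, ?_⟩
      rw [Walk.edges_concat, List.concat_eq_append]
      intro hmem
      rcases List.mem_append.mp hmem with hm | hm
      · exact hrp (Walk.fst_mem_support_of_mem_edges p hm)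
      · simp only [List.mem_singleton, Sym2.eq_iff] at hm
        rcases hm with ⟨h1, h2⟩ | ⟨h1, h2⟩
        · exact hdisj _ hyS (h1 ▸ hr)
        · exact hxy h2
    have hlen := HC r _ hcyc
    rw [Walk.length_cons, Walk.length_concat] at hlen
    have hp1 : p.length = 1 := by omega
    have hadj : G.Adj x y := by
      have h0 := p.adj_getVert_succ (i := 0) (by omega)
      rwa [Walk.getVert_zero, show (0+1 : ℕ) = p.length from by omega,
        Walk.getVert_length] at h0
    exact ⟨rfl, hadj⟩
  · exfalso
    have hrr' := hclq hrr
    have hq1P : (p.concat hry.symm).IsPath := isPath_concat hpP hr'p hry.symm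
    have hrq1 : r ∉ (p.concat hry.symm).support := by
      rw [Walk.support_concat]
      intro hmem
      rcases List.mem_append.mp hmem with hm | hm
      · exact hrp hm
      · simp only [List.mem_singleton] at hm
        exact hrr hm
    have hq2P : ((p.concat hry.symm).concat hrr'.symm).IsPath :=
      isPath_concat hq1P hrq1 hrr'.symm
    have hcyc : (Walk.cons hrx ((p.concat hry.symm).concat hrr'.symm)).IsCycle := by
      rw [Walk.cons_isCycle_iff]
      refine ⟨hq2P, ?_⟩
      rw [Walk.edges_concat, Walk.edges_concat, List.concat_eq_append, List.concat_eq_append]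
      intro hmem
      rcases List.mem_append.mp hmem with hm | hm
      · rcases List.mem_append.mp hm with hm2 | hm2
        · exact hrp (Walk.fst_mem_support_of_mem_edges p hm2)
        · simp only [List.mem_singleton, Sym2.eq_iff] at hm2
          rcases hm2 with ⟨h1, h2⟩ | ⟨h1, h2⟩
          · exact hdisj _ hyS (h1 ▸ hr)
          · exact hrr h1
      · simp only [List.mem_singleton, Sym2.eq_iff] at hm
        rcases hm with ⟨h1, h2⟩ | ⟨h1, h2⟩
        · exact hrr h1
        · exact hdisj _ hxS (h2 ▸ hr')
    have hlen := HC r _ hcyc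
    rw [Walk.length_cons, Walk.length_concat, Walk.length_concat] at hlen
    have hp0 : p.length = 0 := by omega
    exact hxy (Walk.eq_of_length_eq_zero hp0)


structure Good (G : SimpleGraph V) (S : Set V) (k : ℕ) (f : ℕ → ℕ) (part : ℕ → Set V) :
    Prop where
  hk : 1 ≤ k
  hf : ∀ i, 0 < i → f i < i
  hempty : ∀ i, k ≤ i → part i = ∅
  hsub : ∀ i, part i ⊆ S
  hdisj : ∀ i j, i ≠ j → Disjoint (part i) (part j)
  hcover : ∀ v ∈ S, ∃ i, v ∈ part i
  hcard : ∀ i, (part i).ncard ≤ 2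
  hedge : ∀ u v, u ∈ S → v ∈ S → G.Adj u v →
    ∃ i j, u ∈ part i ∧ v ∈ part j ∧ (i = j ∨ (0 < i ∧ f i = j) ∨ (0 < j ∧ f j = i))

lemma Good.lt_k {S : Set V} {k : ℕ} {f : ℕ → ℕ} {part : ℕ → Set V}
    (g : Good G S k f part) {i : ℕ} {v : V} (hv : v ∈ part i) : i < k := by
  by_contra h
  rw [g.hempty i (by omega)] at hv
  exact hv

lemma merge {S₁ S₂ : Set V} {k₁ k₂ : ℕ} {f₁ f₂ : ℕ → ℕ} {p₁ p₂ : ℕ → Set V}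
    (g₁ : Good G S₁ k₁ f₁ p₁) (g₂ : Good G S₂ k₂ f₂ p₂) (hdis : Disjoint S₁ S₂)
    (hcross : ∀ u v, u ∈ S₁ → v ∈ S₂ → G.Adj u v → u ∈ p₁ 0 ∧ v ∈ p₂ 0) :
    Good G (S₁ ∪ S₂) (k₁ + k₂)
      (fun i => if i < k₁ then f₁ i else if i = k₁ then 0 else k₁ + f₂ (i - k₁))
      (fun i => if i < k₁ then p₁ i else p₂ (i - k₁)) := by
  have hk₁ := g₁.hk
  have hk₂ := g₂.hk
  constructor
  · omega
  · intro i hi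
    by_cases h1 : i < k₁
    · simpa [h1] using g₁.hf i hi
    · by_cases h2 : i = k₁
      · simp [h1, h2]; omega
      · have hgt : k₁ < i := by omega
        have := g₂.hf (i - k₁) (by omega)
        simp only [h1, h2, if_false]
        omega
  · intro i hi
    have h1 : ¬ i < k₁ := by omega
    simp only [h1, if_false]
    exact g₂.hempty (i - k₁) (by omega)
  · intro i
    by_cases h1 : i < k₁
    · simp only [h1, if_true]
      exact (g₁.hsub i).trans Set.subset_union_left
    · simp only [h1, if_false]
      exact (g₂.hsub _).trans Set.subset_union_right
  · intro i j hij
    by_cases h1 : i < k₁ <;> by_cases h2 : j < k₁ <;> simp only [h1, h2, if_true, if_false]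
    · exact g₁.hdisj i j hij
    · exact Set.disjoint_of_subset (g₁.hsub i) (g₂.hsub _) hdis
    · exact Set.disjoint_of_subset (g₂.hsub _) (g₁.hsub j) hdis.symm
    · exact g₂.hdisj _ _ (by omega)
  · intro v hv
    rcases hv with hv | hv
    · obtain ⟨i, hi⟩ := g₁.hcover v hv
      have := g₁.lt_k hi
      exact ⟨i, by simp [this, hi]⟩
    · obtain ⟨i, hi⟩ := g₂.hcover v hv
      refine ⟨k₁ + i, ?_⟩
      have h1 : ¬ k₁ + i < k₁ := by omega
      simp only [h1, if_false]
      simpa using hi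
  · intro i
    by_cases h1 : i < k₁ <;> simp only [h1, if_true, if_false]
    · exact g₁.hcard i
    · exact g₂.hcard _
  · intro u v hu hv hadj
    have hu' : u ∈ S₁ ∨ u ∈ S₂ := hu
    have hv' : v ∈ S₁ ∨ v ∈ S₂ := hv
    rcases hu' with hu1 | hu2 <;> rcases hv' with hv1 | hv2
    · obtain ⟨i, j, hui, hvj, hrel⟩ := g₁.hedge u v hu1 hv1 hadj
      have hik := g₁.lt_k hui
      have hjk := g₁.lt_k hvj
      refine ⟨i, j, by simp [hik, hui], by simp [hjk, hvj], ?_⟩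
      rcases hrel with rfl | ⟨hi0, hfi⟩ | ⟨hj0, hfj⟩
      · exact Or.inl rfl
      · exact Or.inr (Or.inl ⟨hi0, by simp [hik, hfi]⟩)
      · exact Or.inr (Or.inr ⟨hj0, by simp [hjk, hfj]⟩)
    · obtain ⟨hu0, hv0⟩ := hcross u v hu1 hv2 hadj
      refine ⟨0, k₁, by simp only [show (0:ℕ) < k₁ from by omega, if_pos]; exact hu0, ?_, ?_⟩
      · have h1 : ¬ k₁ < k₁ := by omega
        simp only [h1, if_false, Nat.sub_self]
        exact hv0
      · exact Or.inr (Or.inr ⟨by omega, by simp⟩)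
    · obtain ⟨hv0, hu0⟩ := hcross v u hv1 hu2 hadj.symm
      refine ⟨k₁, 0, ?_, by simp only [show (0:ℕ) < k₁ from by omega, if_pos]; exact hv0, ?_⟩
      · have h1 : ¬ k₁ < k₁ := by omega
        simp only [h1, if_false, Nat.sub_self]
        exact hu0
      · exact Or.inr (Or.inl ⟨by omega, by simp⟩)
    · obtain ⟨i, j, hui, hvj, hrel⟩ := g₂.hedge u v hu2 hv2 hadj
      have h1 : ¬ k₁ + i < k₁ := by omega
      have h2 : ¬ k₁ + j < k₁ := by omega
      refine ⟨k₁ + i, k₁ + j, by simp [h1, hui], by simp [h2, hvj], ?_⟩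
      rcases hrel with rfl | ⟨hi0, hfi⟩ | ⟨hj0, hfj⟩
      · exact Or.inl rfl
      · refine Or.inr (Or.inl ⟨by omega, ?_⟩)
        have e1 : ¬ k₁ + i = k₁ := by omega
        simp only [h1, if_false, e1, if_false, Nat.add_sub_cancel_left]
        omega
      · refine Or.inr (Or.inr ⟨by omega, ?_⟩)
        have e1 : ¬ k₁ + j = k₁ := by omega
        simp only [h2, if_false, e1, if_false, Nat.add_sub_cancel_left]
        omega


lemma main [DecidableEq V] (HC : ∀ (v : V) (c : G.Walk v v), c.IsCycle → c.length = 3) :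
    ∀ (n : ℕ) (S R : Set V), S.Finite → S.ncard ≤ n → R ⊆ S → R.Nonempty → R.ncard ≤ 2 →
    (∀ a ∈ R, ∀ b ∈ R, a ≠ b → G.Adj a b) →
    (∀ v ∈ S, ∃ r ∈ R, Rch G S r v) →
    ∃ k f part, Good G S k f part ∧ part 0 = R := by
  intro n
  induction n with
  | zero =>
    intro S R hfin hcard hRS hRne _ _ _
    exfalso
    have hS0 : S.ncard = 0 := by omega
    have hSe : S = ∅ := (Set.ncard_eq_zero hfin).mp hS0
    obtain ⟨r, hr⟩ := hRne
    exact absurd (hSe ▸ hRS hr) (Set.notMem_empty r)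
  | succ n ih =>
    intro S R hfin hcard hRS hRne hR2 hclq hconn
    by_cases hSR : S ⊆ R
    · have hSR' : S = R := Set.Subset.antisymm hSR hRS
      refine ⟨1, fun i => i - 1, fun i => if i = 0 then R else ∅,
        ⟨le_rfl, fun i hi => by omega, fun i hi => by simp [show i ≠ 0 by omega],
         fun i => ?_, fun i j hij => ?_, fun v hv => ⟨0, by simpa using hSR hv⟩,
         fun i => ?_, fun u v hu hv hadj => ⟨0, 0, by simpa using hSR hu,
           by simpa using hSR hv, Or.inl rfl⟩⟩, by simp⟩
      · by_cases h : i = 0 <;> simp [h, hRS]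
      · by_cases h1 : i = 0 <;> by_cases h2 : j = 0 <;>
          simp [h1, h2, Set.disjoint_empty, Set.empty_disjoint]
        exact absurd (h1.trans h2.symm) hij
      · by_cases h : i = 0 <;> simp [h, hR2]
    · have hx' : ∃ x ∈ S, x ∉ R := by
        by_contra hcon
        push_neg at hcon
        exact hSR hcon
      obtain ⟨x, hxS, hxR⟩ := hx'
      set S' := S \ R with hS'
      set C := {y | y ∈ S' ∧ Rch G S' x y} with hCdef
      set N := {u | u ∈ C ∧ ∃ r ∈ R, G.Adj r u} with hNdef
      have hxC : x ∈ C := ⟨⟨hxS, hxR⟩, Rch.refl⟩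
      have hCS' : C ⊆ S' := fun y hy => hy.1
      have hCS : C ⊆ S := fun y hy => hy.1.1
      have hCR : ∀ y ∈ C, y ∉ R := fun y hy => hy.1.2
      have hclose : ∀ a b, a ∈ C → b ∈ S' → G.Adj a b → b ∈ C := by
        intro a b ha hb hadj
        exact ⟨hb, ha.2.tail ⟨ha.1, hb, hadj⟩⟩
      obtain ⟨r0, hr0, hrx0⟩ := hconn x hxS
      obtain ⟨u0, hu0S, hu0R, hu0adj, hu0rch⟩ := last_exit hrx0 hxR hr0
      have hu0C : u0 ∈ C := ⟨⟨hu0S, hu0R⟩, hu0rch.symm⟩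
      have hu0N : u0 ∈ N := ⟨hu0C, hu0adj⟩
      have hNC : N ⊆ C := fun u hu => hu.1
      have hNkey : ∀ a ∈ N, ∀ b ∈ N, a ≠ b → ∀ r ∈ R, G.Adj r a → ∀ r' ∈ R, G.Adj r' b →
          r = r' ∧ G.Adj a b := by
        intro a ha b hb hab r hr hra r' hr' hr'b
        refine keyA HC (S' := S') (R := R) (fun z hz => hz.2) hab (hCS' ha.1) (hCS' hb.1)
          hr hr' hra hr'b (fun hne => hclq r hr r' hr' hne) ?_
        exact (ha.1.2.symm).trans hb.1.2
      have hNclq : ∀ a ∈ N, ∀ b ∈ N, a ≠ b → G.Adj a b := by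
        intro a ha b hb hab
        obtain ⟨r, hr, hra⟩ := ha.2
        obtain ⟨r', hr', hrb⟩ := hb.2
        exact (hNkey a ha b hb hab r hr hra r' hr' hrb).2
      have hNsub : ∃ a b : V, N ⊆ {a, b} := by
        rcases Set.eq_empty_or_nonempty N with he | ⟨a, haN⟩
        · exact ⟨x, x, by simp [he]⟩
        by_cases hone : N ⊆ {a}
        · exact ⟨a, a, by simpa using hone⟩
        have hone' : ∃ b ∈ N, b ≠ a := by
          by_contra hcon
          push_neg at hcon
          exact hone (fun z hz => hcon z hz)
        obtain ⟨b, hbN, hba⟩ := hone'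
        refine ⟨a, b, ?_⟩
        intro z hzN
        by_contra hz
        simp only [Set.mem_insert_iff, Set.mem_singleton_iff] at hz
        push_neg at hz
        obtain ⟨hza, hzb⟩ := hz
        obtain ⟨r, hr, hra⟩ := haN.2
        obtain ⟨r', hr', hrb'⟩ := hbN.2
        have hrb : G.Adj r b := by
          rw [(hNkey a haN b hbN (Ne.symm hba) r hr hra r' hr' hrb').1]
          exact hrb'
        obtain ⟨r'', hr'', hrz''⟩ := hzN.2
        have hrz : G.Adj r z := by
          rw [(hNkey a haN z hzN (Ne.symm hza) r hr hra r'' hr'' hrz'').1]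
          exact hrz''
        have hab : G.Adj a b := hNclq a haN b hbN (Ne.symm hba)
        have hbz : G.Adj b z := hNclq b hbN z hzN (Ne.symm hzb)
        exact no4cycle HC hra hab hbz hrz.symm
          (fun h => hCR b (hNC hbN) (h ▸ hr)) (Ne.symm hza)
      have hN2 : N.ncard ≤ 2 := by
        obtain ⟨a, b, hab⟩ := hNsub
        calc N.ncard ≤ ({a, b} : Set V).ncard := Set.ncard_le_ncard hab (Set.toFinite _)
          _ ≤ 2 := by
              have h1 := Set.ncard_insert_le a ({b} : Set V)
              have h2 : ({b} : Set V).ncard = 1 := Set.ncard_singleton b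
              omega
      have hCss : C ⊂ S := by
        refine ⟨hCS, fun hcon => ?_⟩
        obtain ⟨r, hr⟩ := hRne
        exact hCR r (hcon (hRS hr)) hr
      have hCn : C.ncard ≤ n := by
        have := Set.ncard_lt_ncard hCss hfin
        omega
      have hconnC : ∀ v ∈ C, ∃ u ∈ N, Rch G C u v := by
        intro v hv
        refine ⟨u0, hu0N, ?_⟩
        have h1 : Rch G S' u0 v := (hu0C.2.symm).trans hv.2
        exact rch_comp h1 hu0C.2
      obtain ⟨k₂, f₂, p₂, g₂, hp₂0⟩ := ih C N (hfin.subset hCS) hCn hNC ⟨u0, hu0N⟩ hN2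
        hNclq hconnC
      have hRSC : R ⊆ S \ C := fun r hr => ⟨hRS hr, fun hc => hCR r hc hr⟩
      have hSCss : S \ C ⊂ S := by
        refine ⟨Set.diff_subset, fun hcon => ?_⟩
        exact (hcon hxS).2 hxC
      have hSCn : (S \ C).ncard ≤ n := by
        have := Set.ncard_lt_ncard hSCss hfin
        omega
      have hclose2 : ∀ a b, a ∈ C → b ∈ S → G.Adj a b → b ∈ R ∨ b ∈ C := by
        intro a b ha hb hadj
        by_cases hbR : b ∈ R
        · exact Or.inl hbR
        · exact Or.inr (hclose a b ha ⟨hb, hbR⟩ hadj)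
      have hconnSC : ∀ v ∈ S \ C, ∃ r ∈ R, Rch G (S \ C) r v := by
        intro v hv
        obtain ⟨r, hr, hrch⟩ := hconn v hv.1
        exact l4 hclose2 hrch hr hv.2
      obtain ⟨k₁, f₁, p₁, g₁, hp₁0⟩ := ih (S \ C) R (hfin.subset Set.diff_subset) hSCn hRSC
        hRne hR2 hclq hconnSC
      have hdis : Disjoint (S \ C) C := Set.disjoint_sdiff_left
      have hcross : ∀ u v, u ∈ S \ C → v ∈ C → G.Adj u v → u ∈ p₁ 0 ∧ v ∈ p₂ 0 := by
        intro u v hu hv hadj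
        have huR : u ∈ R := by
          by_contra huR
          exact hu.2 (hclose v u hv ⟨hu.1, huR⟩ hadj.symm)
        refine ⟨by rw [hp₁0]; exact huR, by rw [hp₂0]; exact ⟨hv, ⟨u, huR, hadj⟩⟩⟩
      have hunion : (S \ C) ∪ C = S := Set.diff_union_of_subset hCS
      have gm := merge g₁ g₂ hdis hcross
      rw [hunion] at gm
      refine ⟨k₁ + k₂, _, _, gm, ?_⟩
      have h0 : (0 : ℕ) < k₁ := g₁.hk
      simp only [h0, if_pos]
      exact hp₁0


lemma outer [DecidableEq V] (HC : ∀ (v : V) (c : G.Walk v v), c.IsCycle → c.length = 3) :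
    ∀ (n : ℕ) (S : Set V), S.Finite → S.ncard ≤ n → ∃ k f part, Good G S k f part := by
  intro n
  induction n with
  | zero =>
    intro S hfin hcard
    have hSe : S = ∅ := (Set.ncard_eq_zero hfin).mp (by omega)
    refine ⟨1, fun i => i - 1, fun _ => ∅,
      ⟨le_rfl, fun i hi => by omega, fun i _ => rfl, fun i => by simp,
       fun i j _ => by simp, fun v hv => absurd (hSe ▸ hv) (Set.notMem_empty v),
       fun i => by simp, fun u v hu _ _ => absurd (hSe ▸ hu) (Set.notMem_empty u)⟩⟩
  | succ n ih =>
    intro S hfin hcard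
    rcases Set.eq_empty_or_nonempty S with rfl | ⟨x, hxS⟩
    · exact ih ∅ Set.finite_empty (by simp)
    set C := {y | y ∈ S ∧ Rch G S x y} with hCdef
    have hxC : x ∈ C := ⟨hxS, Rch.refl⟩
    have hCS : C ⊆ S := fun y hy => hy.1
    have hclose : ∀ a b, a ∈ C → b ∈ S → G.Adj a b → b ∈ C := by
      intro a b ha hb hadj
      exact ⟨hb, ha.2.tail ⟨ha.1, hb, hadj⟩⟩
    have hconnC : ∀ v ∈ C, ∃ r ∈ ({x} : Set V), Rch G C r v := by
      intro v hv
      exact ⟨x, rfl, rch_comp hv.2 Rch.refl⟩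
    obtain ⟨k₂, f₂, p₂, g₂, hp₂0⟩ := main HC C.ncard C {x} (hfin.subset hCS) le_rfl
      (fun y hy => by rw [Set.mem_singleton_iff] at hy; subst hy; exact hxC)
      ⟨x, rfl⟩ (by simp) (fun a ha b hb hab => absurd (Set.mem_singleton_iff.mp ha |>.trans (Set.mem_singleton_iff.mp hb).symm) hab) hconnC
    have hSCss : S \ C ⊂ S := by
      refine ⟨Set.diff_subset, fun hcon => ?_⟩
      exact (hcon hxS).2 hxC
    have hSCn : (S \ C).ncard ≤ n := by
      have := Set.ncard_lt_ncard hSCss hfin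
      omega
    obtain ⟨k₁, f₁, p₁, g₁⟩ := ih (S \ C) (hfin.subset Set.diff_subset) hSCn
    have hcross : ∀ u v, u ∈ S \ C → v ∈ C → G.Adj u v → u ∈ p₁ 0 ∧ v ∈ p₂ 0 := by
      intro u v hu hv hadj
      exact absurd (hclose v u hv hu.1 hadj.symm) hu.2
    have gm := merge g₁ g₂ Set.disjoint_sdiff_left hcross
    rw [Set.diff_union_of_subset hCS] at gm
    exact ⟨_, _, _, gm⟩

lemma final [Fintype V]
    (HC : ∀ (v : V) (c : G.Walk v v), c.IsCycle → c.length = 3) :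
    ∃ (ι : Type) (T : SimpleGraph ι), T.IsTree ∧
      ∃ P : V → ι,
        (∀ ⦃u v : V⦄, G.Adj u v → P u = P v ∨ T.Adj (P u) (P v)) ∧
        ∀ i : ι, {v : V | P v = i}.ncard ≤ 2 := by
  classical
  obtain ⟨k, f, part, g⟩ := outer HC (Set.univ : Set V).ncard Set.univ Set.finite_univ le_rfl
  set F : ℕ → ℕ := fun i => if 0 < i ∧ i < k then f i else i - 1 with hF
  have hFlt : ∀ i, 0 < i → F i < i := by
    intro i hi
    by_cases h : i < k
    · simpa [hF, hi, h] using g.hf i hi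
    · simp only [hF, h, and_false, if_false]
      omega
  have hFeq : ∀ i, 0 < i → i < k → F i = f i := by
    intro i h1 h2
    simp [hF, h1, h2]
  set P : V → ℕ := fun v => Classical.choose (g.hcover v (Set.mem_univ v)) with hPdef
  have hP : ∀ v, v ∈ part (P v) := fun v => Classical.choose_spec (g.hcover v (Set.mem_univ v))
  have hPuniq : ∀ (v : V) (i : ℕ), v ∈ part i → P v = i := by
    intro v i hvi
    by_contra hne
    exact Set.disjoint_left.mp (g.hdisj _ i hne) (hP v) hvi
  refine ⟨ℕ, pTree F, pTree_isTree hFlt, P, ?_, ?_⟩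
  · intro u v hadj
    obtain ⟨i, j, hui, hvj, hrel⟩ := g.hedge u v (Set.mem_univ u) (Set.mem_univ v) hadj
    rw [hPuniq u i hui, hPuniq v j hvj]
    rcases hrel with rfl | ⟨hi0, hfi⟩ | ⟨hj0, hfj⟩
    · exact Or.inl rfl
    · refine Or.inr ⟨?_, Or.inl ⟨hi0, by rw [hFeq i hi0 (g.lt_k hui), hfi]⟩⟩
      have := g.hf i hi0
      omega
    · refine Or.inr ⟨?_, Or.inr ⟨hj0, by rw [hFeq j hj0 (g.lt_k hvj), hfj]⟩⟩
      have := g.hf j hj0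
      omega
  · intro i
    have hsub : {v : V | P v = i} ⊆ part i := by
      intro v hv
      have := hP v
      rwa [hv] at this
    exact le_trans (Set.ncard_le_ncard hsub (Set.toFinite _)) (g.hcard i)

lemma red1 [Fintype V]
    (hB : ∀ B : Set V, IsBlock G B →
      B.ncard ≤ 2 ∨ (B.ncard = 3 ∧ ∀ u ∈ B, ∀ v ∈ B, u ≠ v → G.Adj u v)) :
    ∀ (v : V) (c : G.Walk v v), c.IsCycle → c.length = 3 := by
  classical
  intro v c hc
  by_contra hne
  have h4 : 4 ≤ c.length := by have := hc.three_le_length; omega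
  set W := {y | y ∈ c.support} with hW
  have hWconn : (G.induce W).Connected :=
    chain_connected c.support c.support_ne_nil c.isChain_adj_support
  have hWcut : ∀ z ∈ W, (G.induce (W \ {z})).Preconnected := by
    intro z hz
    have hzc : z ∈ c.support := hz
    set c' := c.rotate _ hzc with hc'
    have hcyc' : c'.IsCycle := Walk.IsCycle.rotate hzc hc
    have hlen' : c'.length = c.length := by
      have h1 := (Walk.rotate_darts c _ hzc).perm.length_eq
      simpa [Walk.length_darts, hc'] using h1
    have hnil : ¬ c'.Nil := by rw [Walk.nil_iff_length_eq]; omega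
    have hsame : ∀ y, y ∈ c'.support ↔ y ∈ c.support := by
      intro y
      have hperm := (Walk.support_rotate c _ hzc).perm
      constructor
      · intro h
        exact List.mem_of_mem_tail (hperm.mem_iff.mp (mem_tail_of_closed c' hnil h))
      · intro h
        have hnilc : ¬ c.Nil := by rw [Walk.nil_iff_length_eq]; omega
        exact List.mem_of_mem_tail (hperm.mem_iff.mpr (mem_tail_of_closed c hnilc h))
    have hq : c'.tail.IsPath := by
      have h2 := hcyc'
      rw [← Walk.cons_tail_eq c' hnil] at h2
      exact ((Walk.cons_isCycle_iff _ _).mp h2).1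
    have hqsupp : c'.tail.support = c'.support.tail := Walk.support_tail_of_not_nil c' hnil
    set L := c'.tail.support.dropLast with hL
    have hlast : c'.tail.support.getLast c'.tail.support_ne_nil = z := Walk.getLast_support _
    have hsplit : L ++ [z] = c'.tail.support := by
      have h1 := List.dropLast_append_getLast c'.tail.support_ne_nil
      rw [hlast] at h1
      exact h1
    have hnodup : c'.tail.support.Nodup := hq.support_nodup
    have hzL : z ∉ L := by
      intro hzmem
      rw [← hsplit] at hnodup
      exact (List.nodup_append.mp hnodup).2.2 z hzmem z (by simp) rfl
    have hseteq : W \ {z} = {x | x ∈ L} := by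
      ext y
      simp only [hW, Set.mem_diff, Set.mem_setOf_eq, Set.mem_singleton_iff]
      constructor
      · rintro ⟨hy, hyz⟩
        have hy' : y ∈ c'.support := (hsame y).mpr hy
        rcases List.mem_cons.mp (c'.support_eq_cons ▸ hy') with rfl | hy2
        · exact absurd rfl hyz
        · rw [← hqsupp, ← hsplit] at hy2
          rcases List.mem_append.mp hy2 with h | h
          · exact h
          · simp only [List.mem_singleton] at h
            exact absurd h hyz
      · intro hyL
        have hy2 : y ∈ c'.tail.support := by
          rw [← hsplit]
          exact List.mem_append.mpr (Or.inl hyL)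
        have hy' : y ∈ c'.support := by
          rw [hqsupp] at hy2
          exact List.mem_of_mem_tail hy2
        exact ⟨(hsame y).mp hy', fun h => hzL (h ▸ hyL)⟩
    rw [hseteq]
    rcases eq_or_ne L [] with hLnil | hLne
    · rintro ⟨a, ha⟩ b
      rw [hLnil] at ha
      simp only [Set.mem_setOf_eq, List.not_mem_nil] at ha
    · have hchain : L.Chain' G.Adj :=
        (c'.tail.isChain_adj_support).prefix (List.dropLast_prefix _)
      exact (chain_connected L hLne hchain).preconnected
  have hcncvW : ConnNoCutVtx G W := ⟨hWconn, hWcut⟩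
  obtain ⟨B, hBmem, hBmax⟩ := Set.Finite.exists_maximalFor id
    {B : Set V | W ⊆ B ∧ ConnNoCutVtx G B} (Set.toFinite _) ⟨W, Set.Subset.rfl, hcncvW⟩
  obtain ⟨hWB, hBc⟩ := hBmem
  have hblock : IsBlock G B := by
    refine ⟨⟨v, hWB (c.start_mem_support : v ∈ W)⟩, hBc, ?_⟩
    intro B' hBB' hB'c
    exact (hBmax ⟨hWB.trans hBB', hB'c⟩ hBB').antisymm hBB'
  have hW4 : 4 ≤ W.ncard := by
    have hWtail : W = {y | y ∈ c.support.tail} := by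
      ext y
      simp only [hW, Set.mem_setOf_eq]
      constructor
      · intro h
        exact mem_tail_of_closed c (by rw [Walk.nil_iff_length_eq]; omega) h
      · exact List.mem_of_mem_tail
    have hcfin : {y | y ∈ c.support.tail} = ↑c.support.tail.toFinset := by ext y; simp
    have hnc : W.ncard = c.length := by
      rw [hWtail, hcfin, Set.ncard_coe_finset, List.toFinset_card_of_nodup hc.support_nodup]
      have := c.length_support
      simp [List.length_tail, this]
    omega
  have h2 : 4 ≤ B.ncard := le_trans hW4 (Set.ncard_le_ncard hWB (Set.toFinite B))
  rcases hB B hblock with h | ⟨h, _⟩ <;> omega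


def IsMinorS {W V : Type} (H : SimpleGraph W) (G : SimpleGraph V) : Prop :=
  ∃ B : W → Set V,
    (∀ w, (B w).Nonempty) ∧
    (∀ w, (G.induce (B w)).Connected) ∧
    (Pairwise fun w₁ w₂ => Disjoint (B w₁) (B w₂)) ∧
    ∀ ⦃w₁ w₂⦄, H.Adj w₁ w₂ → ∃ u ∈ B w₁, ∃ v ∈ B w₂, G.Adj u v

lemma singleton_induce_connected (a : V) : (G.induce {a}).Connected := by
  have h := chain_connected (G := G) [a] (by simp) (List.isChain_singleton a)
  have hset : {x : V | x ∈ [a]} = {a} := by ext y; simp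
  rwa [hset] at h

lemma red2 (hm : ¬ IsMinorS (completeBipartiteGraph (Fin 2) (Fin 2)) G) :
    ∀ (v : V) (c : G.Walk v v), c.IsCycle → c.length = 3 := by
  intro v c hc
  by_contra hlen
  have h4 : 4 ≤ c.length := by have := hc.three_le_length; omega
  apply hm
  refine ⟨fun w => c.getVert '' (Sum.elim
      (fun i : Fin 2 => if i = 0 then {c.length} else {2})
      (fun j : Fin 2 => if j = 0 then ({1} : Set ℕ) else Set.Icc 3 (c.length - 1)) w),
    ?_, ?_, ?_, ?_⟩
  · rintro (i | i) <;> fin_cases i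
    · exact ⟨c.getVert c.length, c.length, by simp, rfl⟩
    · exact ⟨c.getVert 2, 2, by simp, rfl⟩
    · exact ⟨c.getVert 1, 1, by simp, rfl⟩
    · exact ⟨c.getVert 3, 3, by simp [Set.mem_Icc]; omega, rfl⟩
  · rintro (i | i)
    · by_cases h0 : i = 0
      · subst h0
        show (G.induce (c.getVert '' ({c.length} : Set ℕ))).Connected
        rw [Set.image_singleton]
        exact singleton_induce_connected _
      · simp only [Sum.elim_inl]
        rw [if_neg h0, Set.image_singleton]
        exact singleton_induce_connected _
    · by_cases h0 : i = 0
      · subst h0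
        show (G.induce (c.getVert '' ({1} : Set ℕ))).Connected
        rw [Set.image_singleton]
        exact singleton_induce_connected _
      · simp only [Sum.elim_inr]
        rw [if_neg h0]
        have hset : {x : V | x ∈ (List.range (c.length - 3)).map (fun j => c.getVert (3 + j))} =
            c.getVert '' Set.Icc 3 (c.length - 1) := by
          ext y
          simp only [List.mem_map, List.mem_range, Set.mem_image, Set.mem_Icc, Set.mem_setOf_eq]
          constructor
          · rintro ⟨j, hj, rfl⟩
            exact ⟨3 + j, ⟨by omega, by omega⟩, rfl⟩
          · rintro ⟨i, ⟨h3, h1⟩, rfl⟩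
            exact ⟨i - 3, by omega, by rw [show 3 + (i - 3) = i from by omega]⟩
        rw [← hset]
        apply chain_connected
        · intro hnil
          apply_fun List.length at hnil
          simp at hnil
          omega
        · dsimp only [List.Chain']
          rw [List.isChain_map, show c.length - 3 = (c.length - 4) + 1 from by omega,
            List.isChain_range_succ]
          intro m hm
          exact c.adj_getVert_succ (by omega)
  · have hinj : ∀ i j : ℕ, 1 ≤ i → i ≤ c.length → 1 ≤ j → j ≤ c.length → i ≠ j →
        c.getVert i ≠ c.getVert j := by
      intro i j h1 h2 h3 hh4 hij he
      exact hij (cycle_getVert_inj hc h1 h2 h3 hh4 he)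
    have hchar : ∀ (w : Fin 2 ⊕ Fin 2) (i : ℕ),
        i ∈ (Sum.elim (fun i : Fin 2 => if i = 0 then ({c.length} : Set ℕ) else {2})
          (fun j : Fin 2 => if j = 0 then ({1} : Set ℕ) else Set.Icc 3 (c.length - 1)) w) →
        1 ≤ i ∧ i ≤ c.length ∧
        ((w = Sum.inl 0 ∧ i = c.length) ∨ (w = Sum.inl 1 ∧ i = 2) ∨
         (w = Sum.inr 0 ∧ i = 1) ∨ (w = Sum.inr 1 ∧ 3 ≤ i ∧ i ≤ c.length - 1)) := by
      rintro (a | a) i hi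
      · by_cases h0 : a = 0
        · subst h0
          have hi' : i ∈ ({c.length} : Set ℕ) := hi
          rw [Set.mem_singleton_iff] at hi'
          exact ⟨by omega, by omega, Or.inl ⟨rfl, hi'⟩⟩
        · have h1 : a = 1 := by
            have := a.isLt
            have h2 : a.val ≠ 0 := fun hh => h0 (Fin.ext hh)
            exact Fin.ext (by omega)
          subst h1
          simp only [Sum.elim_inl] at hi
          rw [if_neg h0, Set.mem_singleton_iff] at hi
          exact ⟨by omega, by omega, Or.inr (Or.inl ⟨rfl, hi⟩)⟩
      · by_cases h0 : a = 0
        · subst h0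
          have hi' : i ∈ ({1} : Set ℕ) := hi
          rw [Set.mem_singleton_iff] at hi'
          exact ⟨by omega, by omega, Or.inr (Or.inr (Or.inl ⟨rfl, hi'⟩))⟩
        · have h1 : a = 1 := by
            have := a.isLt
            have h2 : a.val ≠ 0 := fun hh => h0 (Fin.ext hh)
            exact Fin.ext (by omega)
          subst h1
          simp only [Sum.elim_inr] at hi
          rw [if_neg h0] at hi
          rw [Set.mem_Icc] at hi
          exact ⟨by omega, by omega, Or.inr (Or.inr (Or.inr ⟨rfl, hi⟩))⟩
    intro w1 w2 hne
    refine Set.disjoint_image_image (fun i hi j hj => ?_)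
    obtain ⟨hi1, hi2, hcase1⟩ := hchar w1 i hi
    obtain ⟨hj1, hj2, hcase2⟩ := hchar w2 j hj
    refine hinj i j hi1 hi2 hj1 hj2 ?_
    rcases hcase1 with ⟨hw1, hi3⟩ | ⟨hw1, hi3⟩ | ⟨hw1, hi3⟩ | ⟨hw1, hi3⟩ <;>
      rcases hcase2 with ⟨hw2, hj3⟩ | ⟨hw2, hj3⟩ | ⟨hw2, hj3⟩ | ⟨hw2, hj3⟩ <;>
      subst hw1 <;> subst hw2 <;> first | exact absurd rfl hne | omega
  · intro w1 w2 hadj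
    have hA01 : G.Adj (c.getVert c.length) (c.getVert 1) := by
      have h := c.adj_getVert_succ (i := 0) (by omega)
      rw [Walk.getVert_zero] at h
      rw [Walk.getVert_length]
      exact h
    have hAn1 : G.Adj (c.getVert (c.length - 1)) (c.getVert c.length) := by
      have h := c.adj_getVert_succ (i := c.length - 1) (by omega)
      rwa [show c.length - 1 + 1 = c.length from by omega] at h
    have hA12 : G.Adj (c.getVert 1) (c.getVert 2) := c.adj_getVert_succ (by omega)
    have hA23 : G.Adj (c.getVert 2) (c.getVert 3) := c.adj_getVert_succ (by omega)
    rcases w1 with a | a <;> rcases w2 with b | b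
    · simp [completeBipartiteGraph] at hadj
    · fin_cases a <;> fin_cases b
      · exact ⟨c.getVert c.length, ⟨c.length, by simp, rfl⟩,
          c.getVert 1, ⟨1, by simp, rfl⟩, hA01⟩
      · exact ⟨c.getVert c.length, ⟨c.length, by simp, rfl⟩,
          c.getVert (c.length - 1), ⟨c.length - 1, by simp [Set.mem_Icc]; omega, rfl⟩,
          hAn1.symm⟩
      · exact ⟨c.getVert 2, ⟨2, by simp, rfl⟩, c.getVert 1, ⟨1, by simp, rfl⟩, hA12.symm⟩
      · exact ⟨c.getVert 2, ⟨2, by simp, rfl⟩,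
          c.getVert 3, ⟨3, by simp [Set.mem_Icc]; omega, rfl⟩, hA23⟩
    · fin_cases a <;> fin_cases b
      · exact ⟨c.getVert 1, ⟨1, by simp, rfl⟩,
          c.getVert c.length, ⟨c.length, by simp, rfl⟩, hA01.symm⟩
      · exact ⟨c.getVert 1, ⟨1, by simp, rfl⟩, c.getVert 2, ⟨2, by simp, rfl⟩, hA12⟩
      · exact ⟨c.getVert (c.length - 1), ⟨c.length - 1, by simp [Set.mem_Icc]; omega, rfl⟩,
          c.getVert c.length, ⟨c.length, by simp, rfl⟩, hAn1⟩
      · exact ⟨c.getVert 3, ⟨3, by simp [Set.mem_Icc]; omega, rfl⟩,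
          c.getVert 2, ⟨2, by simp, rfl⟩, hA23.symm⟩
    · simp [completeBipartiteGraph] at hadj

end Stmt11

/-- If every block of `G` is a triangle, a single edge, or a single vertex, then `G`
has a `T`-partition of width at most 2 for some tree `T`; in particular, every
`K_{2,2}`-minor-free graph `G` satisfies `tpw₁(G) ≤ 2`. -/
theorem stmt_11 :
    (∀ (V : Type) [Fintype V] (G : SimpleGraph V),
      (∀ B : Set V, IsBlock G B →
        B.ncard ≤ 2 ∨ (B.ncard = 3 ∧ ∀ u ∈ B, ∀ v ∈ B, u ≠ v → G.Adj u v)) →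
      ∃ (ι : Type) (T : SimpleGraph ι), T.IsTree ∧
        ∃ P : V → ι,
          (∀ ⦃u v : V⦄, G.Adj u v → P u = P v ∨ T.Adj (P u) (P v)) ∧
          ∀ i : ι, {v : V | P v = i}.ncard ≤ 2) ∧
    (∀ (V : Type) [Fintype V] (G : SimpleGraph V),
      ¬ IsMinor (completeBipartiteGraph (Fin 2) (Fin 2)) G →
      ∃ (ι : Type) (T : SimpleGraph ι), T.IsTree ∧
        ∃ P : V → ι,
          (∀ ⦃u v : V⦄, G.Adj u v → P u = P v ∨ T.Adj (P u) (P v)) ∧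
          ∀ i : ι, {v : V | P v = i}.ncard ≤ 2) := by
  constructor
  · intro V _ G hB
    exact Stmt11.final (Stmt11.red1 hB)
  · intro V _ G hm
    exact Stmt11.final (Stmt11.red2 (fun h => hm h))
end

section
/- Let H be a graph of maximum degree Δ and girth g, and suppose its line graph L(H) is c-coloured (vertices of L(H) partitioned into c colour classes) such that every monochromatic connected component has at most f vertices, with f < g. If H is Δ-regular with Δ = 2c and has n vertices, then some colour class contains at least n edges of H, and hence contains a cycle of H of length at least g, giving a contradiction; consequently f ≥ g. -/
open SimpleGraph Finset

/-! A `2c`-regular graph on `n` vertices has `c n` edges, so some colour class has at least `n`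
edges and therefore contains a cycle of `H`. That cycle has at least `g` distinct edges, and
consecutive edges of a walk share a vertex, so they all lie in one monochromatic component
of `L(H)`. -/

namespace SimpleGraph

variable {V : Type*} {G : SimpleGraph V}

theorem IsAcyclic.card_edgeSet_lt [Finite V] [Nonempty V] (hG : G.IsAcyclic) :
    Nat.card G.edgeSet < Nat.card V := by
  obtain ⟨T, hGT, -, hT⟩ := connected_top.exists_isTree_le_of_le_of_isAcyclic le_top hG
  have hT_card := (isTree_iff_connected_and_card.mp hT).2
  have := Nat.card_mono (Set.toFinite T.edgeSet) (edgeSet_mono hGT)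
  omega

theorem IsRegularOfDegree.two_mul_card_edgeFinset [Fintype V] [DecidableRel G.Adj] {d : ℕ}
    (h : G.IsRegularOfDegree d) : 2 * #G.edgeFinset = d * Fintype.card V := by
  rw [← sum_degrees_eq_twice_card_edges, Finset.sum_congr rfl fun v _ => h.degree_eq v,
    Finset.sum_const, Finset.card_univ, smul_eq_mul, mul_comm]

theorem exists_isCycle_edges_mem_of_card_le_ncard [Finite V] [Nonempty V] (S : Set G.edgeSet)
    (hS : Nat.card V ≤ S.ncard) :
    ∃ (u : V) (p : G.Walk u u),
      p.IsCycle ∧ ∀ e : G.edgeSet, (e : Sym2 V) ∈ p.edges → e ∈ S := by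
  set K := fromEdgeSet (Subtype.val '' S)
  have hKG : K ≤ G := (fromEdgeSet_le G).mpr <| Set.sdiff_subset.trans <| by
    rintro _ ⟨e, -, rfl⟩
    exact e.2
  have hSK : Subtype.val '' S ⊆ K.edgeSet := by
    rintro _ ⟨e, he, rfl⟩
    rw [edgeSet_fromEdgeSet]
    exact ⟨⟨e, he, rfl⟩, G.not_isDiag_of_mem_edgeSet e.2⟩
  have hK : ¬K.IsAcyclic := fun hK => by
    have := Nat.card_mono (Set.toFinite K.edgeSet) hSK
    rw [Nat.card_coe_set_eq, Set.ncard_image_of_injective _ Subtype.val_injective] at this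
    exact absurd hK.card_edgeSet_lt (by omega)
  obtain ⟨u, p, hp⟩ : ∃ (u : V) (p : K.Walk u u), p.IsCycle := by
    simpa [IsAcyclic] using hK
  refine ⟨u, p.mapLe hKG, hp.mapLe hKG, fun e he => ?_⟩
  rw [Walk.edges_mapLe_eq_edges] at he
  have : (e : Sym2 V) ∈ K.edgeSet := p.edges_subset_edgeSet he
  rw [edgeSet_fromEdgeSet] at this
  obtain ⟨⟨e', he', hee'⟩, -⟩ := this
  rwa [← Subtype.ext hee']

theorem reachable_induce_lineGraph_of_mem_of_mem {S : Set G.edgeSet} {x y : S} {v : V}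
    (hx : v ∈ ((x : G.edgeSet) : Sym2 V)) (hy : v ∈ ((y : G.edgeSet) : Sym2 V)) :
    (G.lineGraph.induce S).Reachable x y := by
  by_cases hxy : x = y
  · exact hxy ▸ Reachable.refl _
  · exact Adj.reachable <|
      lineGraph_adj_iff_exists.mpr ⟨fun h => hxy (Subtype.ext h), v, hx, hy⟩

theorem Walk.reachable_induce_lineGraph {S : Set G.edgeSet} {u v : V} (p : G.Walk u v)
    (hS : ∀ e : G.edgeSet, (e : Sym2 V) ∈ p.edges → e ∈ S) {x y : S}
    (hx : ((x : G.edgeSet) : Sym2 V) ∈ p.edges) (hy : ((y : G.edgeSet) : Sym2 V) ∈ p.edges) :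
    (G.lineGraph.induce S).Reachable x y := by
  induction p generalizing x y with
  | nil => simp at hx
  | @cons a b w hab q ih =>
    have hq : ∀ e : G.edgeSet, (e : Sym2 V) ∈ q.edges → e ∈ S :=
      fun e he => hS e (by simp [he])
    set x₀ : S := ⟨⟨s(a, b), hab⟩, hS _ (by simp)⟩
    have reach_x₀ : ∀ z : S, ((z : G.edgeSet) : Sym2 V) ∈ (cons hab q).edges →
        (G.lineGraph.induce S).Reachable x₀ z := by
      intro z hz
      rcases List.mem_cons.mp hz with hz | hz
      · rw [show z = x₀ from Subtype.ext (Subtype.ext hz)]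
      · cases q with
        | nil => simp at hz
        | cons hbc q' =>
          set x₁ : S := ⟨⟨s(b, _), hbc⟩, hq _ (by simp)⟩
          have hx₀x₁ : (G.lineGraph.induce S).Reachable x₀ x₁ :=
            reachable_induce_lineGraph_of_mem_of_mem (v := b) (by simp [x₀]) (by simp [x₁])
          exact hx₀x₁.trans (ih hq (x := x₁) (by simp [x₁]) hz)
    exact (reach_x₀ x hx).symm.trans (reach_x₀ y hy)

theorem Walk.IsTrail.length_le_ncard_supp [Finite V] {S : Set G.edgeSet} {u v : V}
    {p : G.Walk u v} (hp : p.IsTrail) (hS : ∀ e : G.edgeSet, (e : Sym2 V) ∈ p.edges → e ∈ S)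
    {x : S} (hx : ((x : G.edgeSet) : Sym2 V) ∈ p.edges) :
    p.length ≤ ((G.lineGraph.induce S).connectedComponentMk x).supp.ncard := by
  classical
  have hsub : {e | e ∈ p.edges} ⊆ (fun y : S => ((y : G.edgeSet) : Sym2 V)) ''
      ((G.lineGraph.induce S).connectedComponentMk x).supp := by
    intro e he
    have heG := p.edges_subset_edgeSet he
    exact ⟨⟨⟨e, heG⟩, hS ⟨e, heG⟩ he⟩,
      ConnectedComponent.sound (p.reachable_induce_lineGraph hS he hx), rfl⟩
  calc p.length = p.edges.toFinset.card := by
        rw [List.toFinset_card_of_nodup hp.edges_nodup, Walk.length_edges]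
    _ = {e | e ∈ p.edges}.ncard := by rw [← Set.ncard_coe_finset]; simp
    _ ≤ _ := (Set.ncard_le_ncard hsub).trans (Set.ncard_image_le)

end SimpleGraph

/-- Let `H` be a `2c`-regular graph on `n ≥ 1` vertices in which every cycle has length
at least `g` (girth at least `g`).  If the line graph `L(H)` is `c`-coloured so that
every monochromatic connected component has at most `f` vertices, then `f ≥ g`. -/
theorem stmt_13 {V : Type} [Fintype V] [Nonempty V] (H : SimpleGraph V)
    [DecidableRel H.Adj] (c g f : ℕ) (hc : 1 ≤ c)
    (hreg : H.IsRegularOfDegree (2 * c))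
    (hgirth : ∀ (u : V) (p : H.Walk u u), p.IsCycle → g ≤ p.length)
    (col : H.edgeSet → Fin c)
    (hclust : ∀ (i : Fin c)
      (C : ((H.lineGraph).induce {e : H.edgeSet | col e = i}).ConnectedComponent),
      C.supp.ncard ≤ f) :
    g ≤ f := by
  have : Nonempty (Fin c) := ⟨⟨0, hc⟩⟩
  have hedges : #H.edgeFinset = c * Fintype.card V := by
    have := hreg.two_mul_card_edgeFinset
    rw [mul_assoc] at this
    omega
  obtain ⟨i, hi⟩ := Fintype.exists_le_card_fiber_of_mul_le_card col (n := Fintype.card V) <| by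
    rw [Fintype.card_fin, ← edgeFinset_card, hedges]
  obtain ⟨u, p, hp, hS⟩ := exists_isCycle_edges_mem_of_card_le_ncard
    {e : H.edgeSet | col e = i}
    (by simpa [Nat.card_eq_fintype_card, Set.ncard_eq_toFinset_card'] using hi)
  obtain ⟨e, he⟩ := List.exists_mem_of_ne_nil p.edges <| by simpa using hp.not_nil
  calc g ≤ p.length := hgirth u p hp
    _ ≤ _ := hp.isTrail.length_le_ncard_supp hS
      (x := ⟨⟨e, p.edges_subset_edgeSet he⟩, hS _ he⟩) he
    _ ≤ f := hclust i _
end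

section
/- For c ≥ 2 and t ∈ ℕ: if G̃ is a subdivision of a graph G and G has an H-partition of width at most t with tw(H) ≤ c, then G̃ has an H'-partition of width at most t with tw(H') ≤ c. -/
open SimpleGraph

universe u

/-- `G'` is a subdivision of `G`: each edge `uv` of `G` is replaced by a path `P_{uv}`
of `G'` between the images of `u` and `v`, these paths being internally disjoint from
each other and from the branch vertices, and together covering all of `G'`. -/
structure Subdivision {V V' : Type u} (G : SimpleGraph V) (G' : SimpleGraph V') where
  fv : V ↪ V'
  path : ∀ ⦃u v : V⦄, G.Adj u v → G'.Walk (fv u) (fv v)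
  isPath : ∀ ⦃u v : V⦄ (h : G.Adj u v), (path h).IsPath
  len : ∀ ⦃u v : V⦄ (h : G.Adj u v), 1 ≤ (path h).length
  symm_rev : ∀ ⦃u v : V⦄ (h : G.Adj u v), path h.symm = (path h).reverse
  internal_avoid : ∀ ⦃u v : V⦄ (h : G.Adj u v) (x : V'), x ∈ (path h).support →
    x ≠ fv u → x ≠ fv v → ∀ w : V, x ≠ fv w
  internal_disj : ∀ ⦃u v a b : V⦄ (h₁ : G.Adj u v) (h₂ : G.Adj a b),
    s(u, v) ≠ s(a, b) → ∀ x : V', x ∈ (path h₁).support → x ∈ (path h₂).support →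
      ∃ w : V, x = fv w
  cover_vertex : ∀ x : V',
    (∃ w : V, x = fv w) ∨ ∃ (u v : V) (h : G.Adj u v), x ∈ (path h).support
  cover_edge : ∀ ⦃x y : V'⦄, G'.Adj x y →
    ∃ (u v : V) (h : G.Adj u v), s(x, y) ∈ (path h).edges


/-! ### Auxiliary machinery for the proof -/

variable {α : Type u} {G : SimpleGraph α} {ι ε : Type u}

lemma getVert_mem_support {a b : α} (w : G.Walk a b) {n : ℕ} (hn : n ≤ w.length) :
    w.getVert n ∈ w.support :=
  Walk.mem_support_iff_exists_getVert.mpr ⟨n, rfl, hn⟩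

lemma getVert_injOn {a b : α} (w : G.Walk a b) (hnd : w.support.Nodup) :
    ∀ {i j : ℕ}, i ≤ w.length → j ≤ w.length → w.getVert i = w.getVert j → i = j := by
  induction w with
  | nil => intro i j hi hj _; simp only [Walk.length_nil, Nat.le_zero] at hi hj; omega
  | cons h p ih =>
    intro i j hi hj hij
    simp only [Walk.support_cons, List.nodup_cons] at hnd
    simp only [Walk.length_cons] at hi hj
    match i, j with
    | 0, 0 => rfl
    | 0, j+1 =>
      exfalso
      rw [Walk.getVert_zero, Walk.getVert_cons_succ] at hij
      exact hnd.1 (hij ▸ getVert_mem_support p (by omega))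
    | i+1, 0 =>
      exfalso
      rw [Walk.getVert_zero, Walk.getVert_cons_succ] at hij
      exact hnd.1 (hij ▸ getVert_mem_support p (by omega))
    | i+1, j+1 =>
      rw [Walk.getVert_cons_succ, Walk.getVert_cons_succ] at hij
      have := ih hnd.2 (by omega) (by omega) hij
      omega

lemma edges_consecutive {a b x y : α} (w : G.Walk a b) (hxy : s(x, y) ∈ w.edges) :
    ∃ k, k < w.length ∧ ((w.getVert k = x ∧ w.getVert (k+1) = y) ∨
      (w.getVert k = y ∧ w.getVert (k+1) = x)) := by
  induction w with
  | nil => simp at hxy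
  | cons h p ih =>
    rw [Walk.edges_cons, List.mem_cons] at hxy
    rcases hxy with heq | hmem
    · refine ⟨0, by simp [Walk.length_cons], ?_⟩
      rw [Walk.getVert_zero, Walk.getVert_cons_succ, Walk.getVert_zero]
      rcases Sym2.eq_iff.mp heq.symm with ⟨h1, h2⟩ | ⟨h1, h2⟩
      · exact Or.inl ⟨h1, h2⟩
      · exact Or.inr ⟨h1, h2⟩
    · obtain ⟨k, hk, hor⟩ := ih hmem
      exact ⟨k+1, by simp [Walk.length_cons]; omega,
        by rwa [Walk.getVert_cons_succ, Walk.getVert_cons_succ]⟩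
lemma cycle_two_neighbors {v x : α} (c : G.Walk v v) (hc : c.IsCycle) (hx : x ∈ c.support) :
    ∃ y z, y ≠ z ∧ G.Adj x y ∧ G.Adj x z ∧ y ∈ c.support ∧ z ∈ c.support := by
  classical
  set c' := c.rotate x hx with hc'def
  have hc' : c'.IsCycle := hc.rotate hx
  have hL : 3 ≤ c'.length := hc'.three_le_length
  have hnil : ¬c'.Nil := hc'.not_nil
  have hmem : ∀ w, w ∈ c'.support → w ∈ c.support := by
    intro w hw
    rw [Walk.support_eq_cons, List.mem_cons] at hw
    rcases hw with rfl | hw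
    · exact hx
    · exact List.mem_of_mem_tail ((Walk.support_rotate c x hx).mem_iff.mp hw)
  refine ⟨c'.getVert 1, c'.getVert (c'.length - 1), ?_, ?_, ?_, ?_, ?_⟩
  · intro hyz
    have hnd : c'.tail.support.Nodup := by
      rw [Walk.support_tail_of_not_nil c' hnil]; exact hc'.support_nodup
    have h0 : c'.tail.getVert 0 = c'.getVert 1 := by rw [Walk.getVert_tail c']
    have h1 : c'.tail.getVert (c'.length - 2) = c'.getVert (c'.length - 1) := by
      rw [Walk.getVert_tail c']; congr 1; omega
    have hlen : c'.tail.length + 1 = c'.length := Walk.length_tail_add_one hnil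
    have := getVert_injOn c'.tail hnd (i := 0) (j := c'.length - 2)
      (by omega) (by omega) (by rw [h0, h1, hyz])
    omega
  · have := c'.adj_getVert_succ (i := 0) (by omega)
    rwa [Walk.getVert_zero] at this
  · have := c'.adj_getVert_succ (i := c'.length - 1) (by omega)
    rw [show c'.length - 1 + 1 = c'.length by omega, Walk.getVert_length] at this
    exact this.symm
  · exact hmem _ (getVert_mem_support c' (by omega))
  · exact hmem _ (getVert_mem_support c' (by omega))
/-- `H` extended by pendant chains. -/
def ExtGraph (H : SimpleGraph ι) (A B : ε → ι) : SimpleGraph (ι ⊕ ε × ℕ) where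
  Adj X Y := match X, Y with
    | .inl a, .inl b => H.Adj a b
    | .inl a, .inr (e, n) => (a = A e ∧ n = 0) ∨ a = B e
    | .inr (e, n), .inl a => (a = A e ∧ n = 0) ∨ a = B e
    | .inr (e, n), .inr (e', n') => e = e' ∧ (n' = n + 1 ∨ n = n' + 1)
  symm := by constructor; rintro (a | ⟨e, n⟩) (b | ⟨f, m⟩) h <;> simp_all <;> tauto
  loopless := by constructor; rintro (a | ⟨e, n⟩) h <;> simp_all

@[simp] lemma extGraph_adj_inl_inl {H : SimpleGraph ι} {A B : ε → ι} {a b : ι} :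
    (ExtGraph H A B).Adj (.inl a) (.inl b) ↔ H.Adj a b := Iff.rfl

@[simp] lemma extGraph_adj_inl_inr {H : SimpleGraph ι} {A B : ε → ι} {a : ι} {e : ε} {n : ℕ} :
    (ExtGraph H A B).Adj (.inl a) (.inr (e, n)) ↔ ((a = A e ∧ n = 0) ∨ a = B e) := Iff.rfl

@[simp] lemma extGraph_adj_inr_inr {H : SimpleGraph ι} {A B : ε → ι} {e e' : ε} {n n' : ℕ} :
    (ExtGraph H A B).Adj (.inr (e, n)) (.inr (e', n')) ↔ (e = e' ∧ (n' = n + 1 ∨ n = n' + 1)) :=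
  Iff.rfl

/-- The tree underlying the tree-decomposition of the extended graph. -/
def ExtTree (T : SimpleGraph ι) (anchor : ε → ι) : SimpleGraph (ι ⊕ ε × ℕ) where
  Adj X Y := match X, Y with
    | .inl a, .inl b => T.Adj a b
    | .inl a, .inr (e, n) => a = anchor e ∧ n = 0
    | .inr (e, n), .inl a => a = anchor e ∧ n = 0
    | .inr (e, n), .inr (e', n') => e = e' ∧ (n' = n + 1 ∨ n = n' + 1)
  symm := by constructor; rintro (a | ⟨e, n⟩) (b | ⟨f, m⟩) h <;> simp_all <;> tauto
  loopless := by constructor; rintro (a | ⟨e, n⟩) h <;> simp_all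

variable {T : SimpleGraph ι} {anchor : ε → ι}

@[simp] lemma extTree_adj_inl_inl {a b : ι} :
    (ExtTree T anchor).Adj (.inl a) (.inl b) ↔ T.Adj a b := Iff.rfl

@[simp] lemma extTree_adj_inl_inr {a : ι} {e : ε} {n : ℕ} :
    (ExtTree T anchor).Adj (.inl a) (.inr (e, n)) ↔ (a = anchor e ∧ n = 0) := Iff.rfl

@[simp] lemma extTree_adj_inr_inl {a : ι} {e : ε} {n : ℕ} :
    (ExtTree T anchor).Adj (.inr (e, n)) (.inl a) ↔ (a = anchor e ∧ n = 0) := Iff.rfl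

@[simp] lemma extTree_adj_inr_inr {e e' : ε} {n n' : ℕ} :
    (ExtTree T anchor).Adj (.inr (e, n)) (.inr (e', n')) ↔ (e = e' ∧ (n' = n + 1 ∨ n = n' + 1)) :=
  Iff.rfl

/-- The inclusion homomorphism from `T` to `ExtTree T anchor`. -/
def inlHom (T : SimpleGraph ι) (anchor : ε → ι) : T →g ExtTree T anchor where
  toFun := Sum.inl
  map_rel' := fun h => h

lemma extTree_connected (hT : T.Connected) : (ExtTree T anchor).Connected := by
  have hchain : ∀ (e : ε) (n : ℕ),
      (ExtTree T anchor).Reachable (.inr (e, n)) (.inl (anchor e)) := by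
    intro e n
    induction n with
    | zero => exact (extTree_adj_inr_inl.mpr ⟨rfl, rfl⟩).reachable
    | succ k ih =>
      exact (Adj.reachable (extTree_adj_inr_inr.mpr ⟨rfl, Or.inr rfl⟩)).trans ih
  have hinl : ∀ a b : ι, (ExtTree T anchor).Reachable (.inl a) (.inl b) := by
    intro a b
    exact (hT.preconnected a b).map (inlHom T anchor)
  have hne : Nonempty (ι ⊕ ε × ℕ) := ⟨.inl hT.nonempty.some⟩
  refine ⟨?_⟩
  rintro (a | ⟨e, n⟩) (b | ⟨f, m⟩)
  · exact hinl a b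
  · exact ((hchain f m).trans (hinl (anchor f) a)).symm
  · exact (hchain e n).trans (hinl (anchor e) b)
  · exact ((hchain e n).trans (hinl (anchor e) (anchor f))).trans (hchain f m).symm

lemma walk_pullback {X Y : ι ⊕ ε × ℕ} (w : (ExtTree T anchor).Walk X Y)
    (hw : ∀ z ∈ w.support, ∃ i : ι, z = Sum.inl i) {a b : ι}
    (ha : X = Sum.inl a) (hb : Y = Sum.inl b) :
    ∃ w' : T.Walk a b, w'.map (inlHom T anchor) = w.copy ha hb := by
  induction w generalizing a b with
  | nil =>
    subst ha
    obtain rfl := Sum.inl_injective hb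
    exact ⟨.nil, rfl⟩
  | @cons X Z Y h p ih =>
    subst ha hb
    obtain ⟨k, rfl⟩ := hw Z (by simp [Walk.support_cons])
    obtain ⟨p', hp'⟩ := ih (fun z hz => hw z (by simp [Walk.support_cons, hz])) rfl rfl
    refine ⟨.cons (extTree_adj_inl_inl.mp h) p', ?_⟩
    simp only [Walk.map_cons, Walk.copy_rfl_rfl] at hp' ⊢
    rw [hp']
    rfl

lemma extTree_isAcyclic (hT : T.IsAcyclic) : (ExtTree T anchor).IsAcyclic := by
  classical
  intro X c hc
  have hclimb : ∀ (e : ε) (n : ℕ), Sum.inr (e, n) ∈ c.support →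
      Sum.inr (e, n+1) ∈ c.support := by
    intro e n hn
    obtain ⟨y, z, hyz, hay, haz, hys, hzs⟩ := cycle_two_neighbors c hc hn
    have hmem : ∀ w, (ExtTree T anchor).Adj (Sum.inr (e, n)) w →
        w = Sum.inr (e, n+1) ∨
          w = (if n = 0 then Sum.inl (anchor e) else Sum.inr (e, n-1)) := by
      rintro (i | ⟨f, m⟩) hw
      · obtain ⟨h1, h2⟩ := extTree_adj_inr_inl.mp hw
        right; rw [if_pos h2, h1]
      · obtain ⟨rfl, h2 | h2⟩ := extTree_adj_inr_inr.mp hw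
        · left; rw [h2]
        · right; rw [if_neg (by omega)]
          subst h2; simp
    rcases hmem y hay with rfl | hy
    · exact hys
    rcases hmem z haz with rfl | hz
    · exact hzs
    · exact absurd (hy.trans hz.symm) hyz
  have hnoinr : ∀ (e : ε) (n : ℕ), Sum.inr (e, n) ∉ c.support := by
    intro e n hn
    have hall : ∀ j : ℕ, Sum.inr (e, n+j) ∈ c.support := by
      intro j
      induction j with
      | zero => simpa using hn
      | succ k ih => exact (by rw [show n + (k+1) = (n+k) + 1 by omega]; exact hclimb e (n+k) ih)
    have hcard := Finset.card_le_card_of_injOn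
      (fun j : ℕ => (Sum.inr (e, n+j) : ι ⊕ ε × ℕ))
      (s := Finset.range (c.support.length + 1)) (t := c.support.toFinset)
      (fun j _ => List.mem_toFinset.mpr (hall j))
      (by intro i _ j _ hij; simp only [Sum.inr.injEq, Prod.mk.injEq] at hij; omega)
    have := List.toFinset_card_le c.support
    simp only [Finset.card_range] at hcard
    omega
  obtain ⟨a, rfl⟩ : ∃ a, X = Sum.inl a := by
    rcases X with a | ⟨e, n⟩
    · exact ⟨a, rfl⟩
    · exact absurd c.start_mem_support (hnoinr e n)
  obtain ⟨w', hw'⟩ := walk_pullback c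
    (fun z hz => by
      rcases z with i | ⟨e, n⟩
      · exact ⟨i, rfl⟩
      · exact absurd hz (hnoinr e n)) rfl rfl
  have hcyc : (w'.map (inlHom T anchor)).IsCycle := by
    rw [hw', Walk.copy_rfl_rfl]; exact hc
  exact hT w'
    ((Walk.map_isCycle_iff_of_injective (f := inlHom T anchor)
      (fun x y hxy => Sum.inl_injective hxy)).mp hcyc)
section TwExtend
variable {H : SimpleGraph ι}

lemma reach_induce {α : Type*} {G : SimpleGraph α} {s : Set α} {x y : α}
    (hx : x ∈ s) (hy : y ∈ s) (w : G.Walk x y) (hw : ∀ z ∈ w.support, z ∈ s) :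
    (G.induce s).Reachable ⟨x, hx⟩ ⟨y, hy⟩ := by
  induction w with
  | nil => rfl
  | @cons x z y h p ih =>
    have hz : z ∈ s := hw z (by simp [Walk.support_cons])
    exact (Adj.reachable (by exact h : (G.induce s).Adj ⟨x, hx⟩ ⟨z, hz⟩)).trans
      (ih hz hy (fun u hu => hw u (by simp [Walk.support_cons, hu])))

/-- Bags for the tree-decomposition of the extended graph. -/
def extBag (d : TreeDecomp H) (A B : ε → ι) : d.ι ⊕ ε × ℕ → Set (ι ⊕ ε × ℕ)
  | .inl i => Sum.inl '' d.bag i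
  | .inr (e, 0) => {Sum.inl (A e), Sum.inl (B e), Sum.inr (e, 0)}
  | .inr (e, n+1) => {Sum.inl (B e), Sum.inr (e, n), Sum.inr (e, n+1)}

theorem tw_extend {c : ℕ} (hc : 2 ≤ c)
    (d : TreeDecomp H) (hd : ∀ i, (d.bag i).ncard ≤ c + 1)
    (A B : ε → ι) (hAB : ∀ e, ∃ i, A e ∈ d.bag i ∧ B e ∈ d.bag i) :
    TreewidthLE (ExtGraph H A B) c := by
  classical
  choose anchor hanchor using hAB
  refine ⟨⟨d.ι ⊕ ε × ℕ, ExtTree d.T anchor,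
      ⟨extTree_connected d.isTree.isConnected, extTree_isAcyclic d.isTree.IsAcyclic⟩,
      extBag d A B, ?_, ?_, ?_⟩, ?_⟩
  · -- mem_bag
    rintro (a | ⟨e, n⟩)
    · obtain ⟨i, hi⟩ := d.mem_bag a
      exact ⟨.inl i, ⟨a, hi, rfl⟩⟩
    · match n with
      | 0 => exact ⟨.inr (e, 0), by simp [extBag]⟩
      | n+1 => exact ⟨.inr (e, n+1), by simp [extBag]⟩
  · -- edge_bag
    have key : ∀ (a : ι) (e : ε) (n : ℕ),
        (ExtGraph H A B).Adj (.inl a) (.inr (e, n)) →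
        ∃ i, Sum.inl a ∈ extBag d A B i ∧ Sum.inr (e, n) ∈ extBag d A B i := by
      intro a e n hadj
      rcases extGraph_adj_inl_inr.mp hadj with ⟨rfl, rfl⟩ | rfl
      · exact ⟨.inr (e, 0), by simp [extBag], by simp [extBag]⟩
      · match n with
        | 0 => exact ⟨.inr (e, 0), by simp [extBag], by simp [extBag]⟩
        | n+1 => exact ⟨.inr (e, n+1), by simp [extBag], by simp [extBag]⟩
    rintro (a | ⟨e, n⟩) (b | ⟨f, m⟩) hadj
    · obtain ⟨i, hi1, hi2⟩ := d.edge_bag (extGraph_adj_inl_inl.mp hadj)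
      exact ⟨.inl i, ⟨a, hi1, rfl⟩, ⟨b, hi2, rfl⟩⟩
    · exact key a f m hadj
    · obtain ⟨i, h1, h2⟩ := key b e n hadj.symm
      exact ⟨i, h2, h1⟩
    · obtain ⟨heq, hm | hm⟩ := extGraph_adj_inr_inr.mp hadj
      · subst heq; subst hm
        exact ⟨.inr (e, n+1), by simp [extBag], by simp [extBag]⟩
      · subst heq; subst hm
        exact ⟨.inr (e, m+1), by simp [extBag], by simp [extBag]⟩
  · -- bag_conn
    rintro (a | ⟨e, k⟩)
    · set s' : Set (d.ι ⊕ ε × ℕ) := {N | Sum.inl a ∈ extBag d A B N} with hs'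
      have hinl_mem : ∀ i : d.ι, a ∈ d.bag i → Sum.inl i ∈ s' := by
        intro i hi; exact ⟨a, hi, rfl⟩
      have hreach : ∀ N, (hN : N ∈ s') → ∃ (i : d.ι) (hi : a ∈ d.bag i),
          ((ExtTree d.T anchor).induce s').Reachable ⟨N, hN⟩ ⟨.inl i, hinl_mem i hi⟩ := by
        rintro (j | ⟨e, k⟩) hN
        · obtain ⟨a', ha', heq⟩ := hN
          obtain rfl := Sum.inl_injective heq
          exact ⟨j, ha', Reachable.refl _⟩
        · -- membership facts
          have hb0 : Sum.inr (e, 0) ∈ s' → (a = A e ∨ a = B e) := by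
            intro hh
            simpa [hs', extBag, Sum.inl_injective.eq_iff] using hh
          have hcases : a = A e ∨ a = B e := by
            match k with
            | 0 => exact hb0 hN
            | k+1 =>
              right
              simpa [hs', extBag, Sum.inl_injective.eq_iff] using hN
          have hanch_bag : a ∈ d.bag (anchor e) := by
            rcases hcases with rfl | rfl
            exacts [(hanchor e).1, (hanchor e).2]
          have hanch_mem : Sum.inl (anchor e) ∈ s' := hinl_mem _ hanch_bag
          have hchain0 : Sum.inr (e, 0) ∈ s' := by
            match k with
            | 0 => exact hN
            | k+1 =>
              have : a = B e := by
                simpa [hs', extBag, Sum.inl_injective.eq_iff] using hN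
              simp [hs', extBag, this]
          have hchain : ∀ j, j ≤ k → Sum.inr (e, j) ∈ s' := by
            intro j hj
            match j with
            | 0 => exact hchain0
            | j+1 =>
              have hk : ∃ k', k = k' + 1 := ⟨j + (k - j - 1), by omega⟩
              obtain ⟨k', rfl⟩ := hk
              have : a = B e := by
                simpa [hs', extBag, Sum.inl_injective.eq_iff] using hN
              simp [hs', extBag, this]
          have hdescend : ∀ (j : ℕ) (hj : Sum.inr (e, j) ∈ s') (hj' : j ≤ k),
              ((ExtTree d.T anchor).induce s').Reachable ⟨.inr (e, j), hj⟩
                ⟨.inl (anchor e), hanch_mem⟩ := by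
            intro j
            induction j with
            | zero =>
              intro hj _
              exact Adj.reachable (by exact ⟨rfl, rfl⟩)
            | succ m ih =>
              intro hj hj'
              refine (Adj.reachable ?_).trans (ih (hchain m (by omega)) (by omega))
              exact (by exact ⟨rfl, Or.inr rfl⟩ :
                ((ExtTree d.T anchor).induce s').Adj ⟨.inr (e, m+1), hj⟩
                  ⟨.inr (e, m), hchain m (by omega)⟩)
          exact ⟨anchor e, hanch_bag, hdescend k hN le_rfl⟩
      haveI : Nonempty ↥s' := by
        obtain ⟨i, hi⟩ := d.mem_bag a; exact ⟨⟨.inl i, hinl_mem i hi⟩⟩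
      constructor
      · rintro ⟨N, hN⟩ ⟨M, hM⟩
        obtain ⟨i, hi, hri⟩ := hreach N hN
        obtain ⟨i', hi', hri'⟩ := hreach M hM
        refine hri.trans (Reachable.trans ?_ hri'.symm)
        let F : d.T.induce {j | a ∈ d.bag j} →g (ExtTree d.T anchor).induce s' :=
          ⟨fun p => ⟨.inl p.1, hinl_mem p.1 p.2⟩, fun {p q} hpq => by exact hpq⟩
        exact ((d.bag_conn a).preconnected ⟨i, hi⟩ ⟨i', hi'⟩).map F
    · set s' : Set (d.ι ⊕ ε × ℕ) := {N | Sum.inr (e, k) ∈ extBag d A B N} with hs'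
      have hself : Sum.inr (e, k) ∈ s' := by
        match k with
        | 0 => simp [hs', extBag]
        | k+1 => simp [hs', extBag]
      have hnext : Sum.inr (e, k+1) ∈ s' := by simp [hs', extBag]
      have hchar : ∀ N, N ∈ s' → N = Sum.inr (e, k) ∨ N = Sum.inr (e, k+1) := by
        rintro (j | ⟨f, m⟩) hN
        · exfalso; obtain ⟨a', _, heq⟩ := hN; exact Sum.inl_ne_inr heq
        · match m with
          | 0 =>
            left
            have := hN
            simp only [hs', extBag, Set.mem_setOf_eq, Set.mem_insert_iff,
              Set.mem_singleton_iff] at this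
            rcases this with h | h | h
            · exact absurd h Sum.inr_ne_inl
            · exact absurd h Sum.inr_ne_inl
            · obtain ⟨rfl, rfl⟩ : e = f ∧ k = 0 := by
                have h2 := Sum.inr_injective h
                exact ⟨(Prod.mk.injEq _ _ _ _ ▸ h2).1, (Prod.mk.injEq _ _ _ _ ▸ h2).2⟩
              rfl
          | m+1 =>
            have := hN
            simp only [hs', extBag, Set.mem_setOf_eq, Set.mem_insert_iff,
              Set.mem_singleton_iff] at this
            rcases this with h | h | h
            · exact absurd h Sum.inr_ne_inl
            · obtain ⟨rfl, rfl⟩ : e = f ∧ k = m := by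
                have := Sum.inr_injective h; exact ⟨(Prod.mk.injEq _ _ _ _ ▸ this).1,
                  (Prod.mk.injEq _ _ _ _ ▸ this).2⟩
              right; rfl
            · obtain ⟨rfl, rfl⟩ : e = f ∧ k = m + 1 := by
                have := Sum.inr_injective h; exact ⟨(Prod.mk.injEq _ _ _ _ ▸ this).1,
                  (Prod.mk.injEq _ _ _ _ ▸ this).2⟩
              left; rfl
      have hadj : ((ExtTree d.T anchor).induce s').Adj ⟨.inr (e, k), hself⟩
          ⟨.inr (e, k+1), hnext⟩ := by exact ⟨rfl, Or.inl rfl⟩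
      haveI : Nonempty ↥s' := ⟨⟨_, hself⟩⟩
      constructor
      rintro ⟨N, hN⟩ ⟨M, hM⟩
      rcases hchar N hN with rfl | rfl <;> rcases hchar M hM with rfl | rfl
      · rfl
      · exact hadj.reachable
      · exact hadj.symm.reachable
      · rfl
  · -- bag sizes
    rintro (i | ⟨e, n⟩)
    · show (Sum.inl '' d.bag i : Set (ι ⊕ ε × ℕ)).ncard ≤ c + 1
      rw [Set.ncard_image_of_injective _ Sum.inl_injective]
      exact hd i
    · match n with
      | 0 =>
        show ({Sum.inl (A e), Sum.inl (B e), Sum.inr (e, 0)} :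
          Set (ι ⊕ ε × ℕ)).ncard ≤ c + 1
        refine le_trans ?_ (by omega : 3 ≤ c + 1)
        calc ({Sum.inl (A e), Sum.inl (B e), Sum.inr (e, 0)} :
              Set (ι ⊕ ε × ℕ)).ncard
            ≤ ({Sum.inl (B e), Sum.inr (e, 0)} : Set (ι ⊕ ε × ℕ)).ncard + 1 :=
              Set.ncard_insert_le _ _
          _ ≤ (({Sum.inr (e, 0)} : Set (ι ⊕ ε × ℕ)).ncard + 1) + 1 := by
              gcongr; exact Set.ncard_insert_le _ _
          _ ≤ 3 := by rw [Set.ncard_singleton]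
      | n+1 =>
        show ({Sum.inl (B e), Sum.inr (e, n), Sum.inr (e, n+1)} :
          Set (ι ⊕ ε × ℕ)).ncard ≤ c + 1
        refine le_trans ?_ (by omega : 3 ≤ c + 1)
        calc ({Sum.inl (B e), Sum.inr (e, n), Sum.inr (e, n+1)} :
              Set (ι ⊕ ε × ℕ)).ncard
            ≤ ({Sum.inr (e, n), Sum.inr (e, n+1)} : Set (ι ⊕ ε × ℕ)).ncard + 1 :=
              Set.ncard_insert_le _ _
          _ ≤ (({Sum.inr (e, n+1)} : Set (ι ⊕ ε × ℕ)).ncard + 1) + 1 := by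
              gcongr; exact Set.ncard_insert_le _ _
          _ ≤ 3 := by rw [Set.ncard_singleton]

end TwExtend

/-- For `c ≥ 2`: if `G'` is a subdivision of `G` and `G` has an `H`-partition of width
at most `t` with `tw(H) ≤ c`, then `G'` has an `H'`-partition of width at most `t` with
`tw(H') ≤ c`; that is, `tpw_c(G') ≤ tpw_c(G)`. -/
theorem stmt_18 {V V' : Type} (G : SimpleGraph V) (G' : SimpleGraph V')
    (S : Subdivision G G') (c t : ℕ) (hc : 2 ≤ c)
    (h : TreePartWidthLE G c t) : TreePartWidthLE G' c t := by
  classical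
  obtain ⟨ι0, H, P, ⟨d, hd⟩, hHadj, hwidth⟩ := h
  by_cases ht : t = 0
  · -- degenerate case: all parts are empty or infinite
    subst ht
    have hcl : ∀ x : V', ∃ w : V, x = S.fv w ∨
        ((¬∃ w', x = S.fv w') ∧ ∃ (v2 : V) (h2 : G.Adj w v2), x ∈ (S.path h2).support) := by
      intro x
      by_cases hx : ∃ w', x = S.fv w'
      · obtain ⟨w, hw'⟩ := hx
        exact ⟨w, Or.inl hw'⟩
      · obtain ⟨u, v, huv, hmem⟩ := (S.cover_vertex x).resolve_left hx
        exact ⟨u, Or.inr ⟨hx, v, huv, hmem⟩⟩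
    choose g hg using hcl
    refine ⟨ι0, H, fun x => P (g x), ⟨d, hd⟩, ?_, ?_⟩
    · intro x y hxy
      obtain ⟨u, v, huv, he⟩ := S.cover_edge hxy
      have hxs : x ∈ (S.path huv).support := Walk.fst_mem_support_of_mem_edges _ he
      have hys : y ∈ (S.path huv).support := Walk.snd_mem_support_of_mem_edges _ he
      have key : ∀ z, z ∈ (S.path huv).support → g z = u ∨ g z = v := by
        intro z hz
        rcases hg z with h1 | ⟨h1, v2, h2, hmem2⟩
        · by_cases hzu : z = S.fv u
          · exact Or.inl (S.fv.injective (hzu ▸ h1.symm))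
          by_cases hzv : z = S.fv v
          · exact Or.inr (S.fv.injective (hzv ▸ h1.symm))
          exact absurd h1 (S.internal_avoid huv z hz hzu hzv (g z))
        · by_cases hne : s(g z, v2) = s(u, v)
          · rcases Sym2.eq_iff.mp hne with ⟨ha, _⟩ | ⟨ha, _⟩
            · exact Or.inl ha
            · exact Or.inr ha
          · exact absurd (S.internal_disj h2 huv hne z hmem2 hz) h1
      have goal_of : ∀ a b : V, a = u ∨ a = v → b = u ∨ b = v →
          P a = P b ∨ H.Adj (P a) (P b) := by
        rintro a b (rfl | rfl) (rfl | rfl)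
        · exact Or.inl rfl
        · exact hHadj huv
        · rcases hHadj huv with h' | h'
          · exact Or.inl h'.symm
          · exact Or.inr h'.symm
        · exact Or.inl rfl
      exact goal_of (g x) (g y) (key x hxs) (key y hys)
    · intro i
      by_cases hne : {x : V' | P (g x) = i}.Nonempty
      · obtain ⟨x0, hx0⟩ := hne
        have hSi : {v : V | P v = i}.Infinite := by
          by_contra hfin
          rw [Set.not_infinite] at hfin
          have h0 := hwidth i
          rw [Nat.le_zero, Set.ncard_eq_zero hfin] at h0
          exact absurd h0 (Set.nonempty_iff_ne_empty.mp ⟨g x0, hx0⟩)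
        have himg : S.fv '' {v : V | P v = i} ⊆ {x : V' | P (g x) = i} := by
          rintro _ ⟨w, hwi, rfl⟩
          rcases hg (S.fv w) with h1 | ⟨h1, _⟩
          · have hgw : g (S.fv w) = w := S.fv.injective h1.symm
            simpa [hgw] using hwi
          · exact absurd ⟨w, rfl⟩ h1
        have : {x : V' | P (g x) = i}.Infinite :=
          Set.Infinite.mono himg (hSi.image (S.fv.injective.injOn))
        simp [this.ncard]
      · rw [Set.not_nonempty_iff_eq_empty] at hne
        simp [hne]
  · -- main case: t ≥ 1
    have ht1 : 1 ≤ t := Nat.one_le_iff_ne_zero.mpr ht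
    have hrepex : ∀ e : Sym2 V, ∃ p : V × V, s(p.1, p.2) = e :=
      fun e => Sym2.ind (fun a b => ⟨(a, b), rfl⟩) e
    choose rep hrep using hrepex
    have repAdj : ∀ e : Sym2 V, e ∈ G.edgeSet → G.Adj (rep e).1 (rep e).2 := by
      intro e he
      rw [← hrep e] at he
      exact he
    -- transfer membership facts to the canonical walk
    have transfer : ∀ (e : Sym2 V) (he : e ∈ G.edgeSet) (u v : V) (huv : G.Adj u v),
        s(u, v) = e →
        (∀ x, x ∈ (S.path huv).support → x ∈ (S.path (repAdj e he)).support) ∧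
        (∀ p : Sym2 V', p ∈ (S.path huv).edges → p ∈ (S.path (repAdj e he)).edges) := by
      intro e he u v huv hE
      have h2 := (hrep e).trans hE.symm
      rcases Sym2.eq_iff.mp h2 with ⟨h1, h2'⟩ | ⟨h1, h2'⟩
      · subst h1; subst h2'
        exact ⟨fun x hx => hx, fun p hp => hp⟩
      · subst h1; subst h2'
        have hrev : S.path (repAdj e he) = (S.path huv).reverse := S.symm_rev huv
        constructor
        · intro x hx
          rw [hrev, Walk.support_reverse, List.mem_reverse]
          exact hx
        · intro p hp
          rw [hrev, Walk.edges_reverse, List.mem_reverse]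
          exact hp
    -- classification of internal vertices
    have hcl : ∀ x : V', ∃ en : Sym2 V × ℕ, (¬∃ w, x = S.fv w) →
        ∃ (he : en.1 ∈ G.edgeSet), 0 < en.2 ∧ en.2 < (S.path (repAdj en.1 he)).length ∧
          (S.path (repAdj en.1 he)).getVert en.2 = x := by
      intro x
      by_cases hx : ∃ w, x = S.fv w
      · exact ⟨(s(hx.choose, hx.choose), 0), fun hcon => absurd hx hcon⟩
      · obtain ⟨u, v, huv, hmem⟩ := (S.cover_vertex x).resolve_left hx
        have he : s(u, v) ∈ G.edgeSet := huv
        have hx2 : x ∈ (S.path (repAdj _ he)).support := (transfer _ he u v huv rfl).1 x hmem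
        obtain ⟨n, hn, hnle⟩ := Walk.mem_support_iff_exists_getVert.mp hx2
        refine ⟨(s(u, v), n), fun _ => ⟨he, ?_, ?_, hn⟩⟩
        · rcases Nat.eq_zero_or_pos n with rfl | hpos
          · rw [Walk.getVert_zero] at hn
            exact absurd ⟨_, hn.symm⟩ hx
          · exact hpos
        · rcases eq_or_lt_of_le hnle with rfl | hlt
          · rw [Walk.getVert_length] at hn
            exact absurd ⟨_, hn.symm⟩ hx
          · exact hlt
    choose q hq using hcl
    set A : Sym2 V → ι0 := fun e => P (rep e).1 with hA
    set B : Sym2 V → ι0 := fun e =>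
      if he : e ∈ G.edgeSet then P (rep e).2 else P (rep e).1 with hB
    set P' : V' → ι0 ⊕ Sym2 V × ℕ := fun x =>
      if hx : ∃ w, x = S.fv w then .inl (P hx.choose) else .inr ((q x).1, (q x).2 - 1)
      with hP'
    have hPint : ∀ (x : V') (hx : ¬∃ w, x = S.fv w) (e : Sym2 V) (he : e ∈ G.edgeSet)
        (n : ℕ), 0 < n → n < (S.path (repAdj e he)).length →
        (S.path (repAdj e he)).getVert n = x → P' x = .inr (e, n - 1) := by
      intro x hx e he n hn0 hnl hgv
      obtain ⟨he', hq0, hql, hqv⟩ := hq x hx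
      have heq : (q x).1 = e := by
        by_contra hne
        refine hx (S.internal_disj (repAdj _ he') (repAdj _ he)
          (by rw [hrep, hrep]; exact hne) x ?_ ?_)
        · exact Walk.mem_support_iff_exists_getVert.mpr ⟨(q x).2, hqv, le_of_lt hql⟩
        · exact Walk.mem_support_iff_exists_getVert.mpr ⟨n, hgv, le_of_lt hnl⟩
      subst heq
      have hnn : (q x).2 = n := getVert_injOn _ (S.isPath _).support_nodup
        (le_of_lt hql) (le_of_lt hnl) (hqv.trans hgv.symm)
      rw [hP']
      dsimp only
      rw [dif_neg hx, hnn]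
    have hPfv : ∀ (w : V), P' (S.fv w) = .inl (P w) := by
      intro w
      have hx : ∃ w', S.fv w = S.fv w' := ⟨w, rfl⟩
      rw [hP']
      dsimp only
      rw [dif_pos hx]
      congr 1
      exact congrArg P (S.fv.injective hx.choose_spec.symm)
    refine ⟨ι0 ⊕ Sym2 V × ℕ, ExtGraph H A B, P', tw_extend hc d hd A B ?_, ?_, ?_⟩
    · -- anchors exist
      intro e
      by_cases he : e ∈ G.edgeSet
      · rcases hHadj (repAdj e he) with hPeq | hAdj
        · obtain ⟨i, hi⟩ := d.mem_bag (P (rep e).1)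
          exact ⟨i, hi, by rw [hB]; dsimp only; rw [dif_pos he, ← hPeq]; exact hi⟩
        · obtain ⟨i, h1, h2⟩ := d.edge_bag hAdj
          exact ⟨i, h1, by rw [hB]; dsimp only; rw [dif_pos he]; exact h2⟩
      · obtain ⟨i, hi⟩ := d.mem_bag (P (rep e).1)
        exact ⟨i, hi, by rw [hB]; dsimp only; rw [dif_neg he]; exact hi⟩
    · -- adjacency condition
      intro x y hxy
      obtain ⟨u0, v0, h0, hedge⟩ := S.cover_edge hxy
      have he : s(u0, v0) ∈ G.edgeSet := h0
      have hedge' : s(x, y) ∈ (S.path (repAdj _ he)).edges :=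
        (transfer _ he u0 v0 h0 rfl).2 _ hedge
      obtain ⟨k, hk, hcase⟩ := edges_consecutive _ hedge'
      have hlen1 : 1 ≤ (S.path (repAdj _ he)).length := S.len _
      have assign : ∀ (z : V') (j : ℕ), j ≤ (S.path (repAdj _ he)).length →
          (S.path (repAdj _ he)).getVert j = z →
          P' z = (if j = 0 then .inl (A s(u0, v0))
            else if j = (S.path (repAdj _ he)).length then .inl (B s(u0, v0))
            else .inr (s(u0, v0), j - 1)) := by
        intro z j hj hgv
        by_cases hj0 : j = 0
        · subst hj0
          rw [Walk.getVert_zero] at hgv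
          rw [if_pos rfl, ← hgv, hPfv]
        by_cases hjl : j = (S.path (repAdj _ he)).length
        · subst hjl
          rw [Walk.getVert_length] at hgv
          rw [if_neg hj0, if_pos rfl, ← hgv, hPfv, hB]
          dsimp only
          rw [dif_pos he]
        · have hzsupp : z ∈ (S.path (repAdj _ he)).support := by
            rw [← hgv]; exact getVert_mem_support _ hj
          have hnd := (S.isPath (repAdj _ he)).support_nodup
          have hne1 : z ≠ S.fv (rep s(u0, v0)).1 := by
            intro hcon
            have h00 : (S.path (repAdj _ he)).getVert 0 = z := by
              rw [Walk.getVert_zero, hcon]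
            exact hj0 (getVert_injOn _ hnd hj (by omega) (hgv.trans h00.symm))
          have hne2 : z ≠ S.fv (rep s(u0, v0)).2 := by
            intro hcon
            have h00 : (S.path (repAdj _ he)).getVert (S.path (repAdj _ he)).length = z := by
              rw [Walk.getVert_length, hcon]
            exact hjl (getVert_injOn _ hnd hj le_rfl (hgv.trans h00.symm))
          have hint : ¬∃ w, z = S.fv w := by
            rintro ⟨w, rfl⟩
            exact S.internal_avoid (repAdj _ he) _ hzsupp hne1 hne2 w rfl
          rw [if_neg hj0, if_neg hjl]
          exact hPint z hint _ he j (by omega) (by omega) hgv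
      have step : ∀ (a b : V') (k : ℕ), k < (S.path (repAdj _ he)).length →
          (S.path (repAdj _ he)).getVert k = a →
          (S.path (repAdj _ he)).getVert (k+1) = b →
          P' a = P' b ∨ (ExtGraph H A B).Adj (P' a) (P' b) := by
        intro a b k hk hva hvb
        have ha := assign a k (le_of_lt hk) hva
        have hb := assign b (k+1) (by omega) hvb
        by_cases hk0 : k = 0
        · subst hk0
          rw [if_pos rfl] at ha
          by_cases h1l : 1 = (S.path (repAdj _ he)).length
          · rw [if_neg (by omega : ¬(0:ℕ) + 1 = 0),
              if_pos (by omega : (0:ℕ) + 1 = (S.path (repAdj s(u0, v0) he)).length)] at hb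
            rw [ha, hb]
            rcases hHadj (repAdj _ he) with hPeq | hAdj
            · left
              rw [hA, hB]
              dsimp only
              rw [dif_pos he, hPeq]
            · right
              rw [hB]
              dsimp only
              rw [dif_pos he]
              exact extGraph_adj_inl_inl.mpr (by rw [hA]; exact hAdj)
          · rw [if_neg (by omega : ¬(0:ℕ) + 1 = 0),
              if_neg (by omega : ¬(0:ℕ) + 1 = (S.path (repAdj s(u0, v0) he)).length)] at hb
            rw [ha, hb]
            right
            exact extGraph_adj_inl_inr.mpr (Or.inl ⟨rfl, rfl⟩)
        · rw [if_neg hk0, if_neg (by omega : ¬k = (S.path (repAdj _ he)).length)] at ha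
          by_cases hkl : k + 1 = (S.path (repAdj _ he)).length
          · rw [if_neg (by omega : ¬k + 1 = 0), if_pos hkl] at hb
            rw [ha, hb]
            right
            exact Or.inr rfl
          · rw [if_neg (by omega : ¬k + 1 = 0), if_neg hkl] at hb
            rw [ha, hb]
            right
            refine extGraph_adj_inr_inr.mpr ⟨rfl, Or.inl ?_⟩
            omega
      rcases hcase with ⟨h1, h2⟩ | ⟨h1, h2⟩
      · exact step x y k hk h1 h2
      · rcases step y x k hk h1 h2 with h' | h'
        · exact Or.inl h'.symm
        · exact Or.inr h'.symm
    · -- part sizes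
      rintro (i | ⟨e, n⟩)
      · have hset : {x : V' | P' x = .inl i} = S.fv '' {v : V | P v = i} := by
          ext x
          constructor
          · intro hx
            rw [Set.mem_setOf_eq] at hx
            by_cases hfv : ∃ w, x = S.fv w
            · have := hPfv hfv.choose
              rw [← hfv.choose_spec] at this
              rw [this] at hx
              exact ⟨hfv.choose, Sum.inl_injective hx, hfv.choose_spec.symm⟩
            · rw [hP'] at hx
              dsimp only at hx
              rw [dif_neg hfv] at hx
              exact absurd hx (by simp)
          · rintro ⟨w, hwi, rfl⟩
            rw [Set.mem_setOf_eq, hPfv, hwi]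
        rw [hset, Set.ncard_image_of_injective _ S.fv.injective]
        exact hwidth i
      · have hsub : {x : V' | P' x = .inr (e, n)}.Subsingleton := by
          intro x hx y hy
          rw [Set.mem_setOf_eq] at hx hy
          have hfvx : ¬∃ w, x = S.fv w := by
            intro hfv
            rw [hP'] at hx
            dsimp only at hx
            rw [dif_pos hfv] at hx
            exact absurd hx (by simp)
          have hfvy : ¬∃ w, y = S.fv w := by
            intro hfv
            rw [hP'] at hy
            dsimp only at hy
            rw [dif_pos hfv] at hy
            exact absurd hy (by simp)
          obtain ⟨hex, hx0, hxl, hxv⟩ := hq x hfvx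
          obtain ⟨hey, hy0, hyl, hyv⟩ := hq y hfvy
          rw [hP'] at hx hy
          dsimp only at hx hy
          rw [dif_neg hfvx] at hx
          rw [dif_neg hfvy] at hy
          have hx1 : (q x).1 = e := congrArg Prod.fst (Sum.inr_injective hx)
          have hy1 : (q y).1 = e := congrArg Prod.fst (Sum.inr_injective hy)
          have hx2 : (q x).2 - 1 = n := congrArg Prod.snd (Sum.inr_injective hx)
          have hy2 : (q y).2 - 1 = n := congrArg Prod.snd (Sum.inr_injective hy)
          have hxy2 : (q x).2 = (q y).2 := by omega
          have walkeq : ∀ (e1 e2 : Sym2 V) (h1 : e1 ∈ G.edgeSet) (h2 : e2 ∈ G.edgeSet)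
              (m : ℕ), e1 = e2 →
              (S.path (repAdj e1 h1)).getVert m = (S.path (repAdj e2 h2)).getVert m := by
            intro e1 e2 hh1 hh2 m heq
            subst heq
            rfl
          calc x = (S.path (repAdj (q x).1 hex)).getVert (q x).2 := hxv.symm
            _ = (S.path (repAdj (q y).1 hey)).getVert (q y).2 := by
                rw [hxy2]; exact walkeq _ _ hex hey _ (hx1.trans hy1.symm)
            _ = y := hyv
        have hfin : {x : V' | P' x = .inr (e, n)}.Finite := hsub.finite
        exact le_trans ((Set.ncard_le_one hfin).mpr (fun a ha b hb => hsub ha hb)) ht1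
end
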